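/- arXiv:1311.4866 — 8 statements merged into one kernel-verified Lean document; each statement's English description precedes it below -/
import Mathlib

section
/- Let A^(1),…,A^(N) ∈ ℝ^{n×n} be Metzler matrices and B^(1),…,B^(N) ∈ ℝ^{n×n} be nonnegative matrices, and suppose there exists ν ≫ 0 with (A^(s) + B^(r))^T ν ≪ 0 for all s, r ∈ {1,…,N}. Then there exist a vector μ ≫ 0 and a constant β > 0 with the following property: for every s ∈ {1,…,N}, every delay τ ≥ 0, every admissible nonlinearity f, and every continuous function x : [−τ,∞) → ℝ^n which is differentiable on (0,∞) and satisfies x′(t) = A^(s) f(x(t)) + B^(s) f(x(t−τ)) for all t > 0, the functional V(t) = Σ_{i=1}^n ν_i |x_i(t)| + Σ_{i=1}^n μ_i ∫_{t−τ}^{t} |f_i(x_i(z))| dz satisfies V(t₂) − V(t₁) ≤ −β ∫_{t₁}^{t₂} Σ_{j=1}^n |f_j(x_j(u))| du for all 0 ≤ t₁ ≤ t₂. -/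
open Matrix
open Filter Set Topology

lemma aux_f_zero (f : ℝ → ℝ) (hc : Continuous f) (hsgn : ∀ y : ℝ, y ≠ 0 → 0 < y * f y) :
    f 0 = 0 := by
  have h1 : f 0 ≤ 0 := by
    have ht : Tendsto f (𝓝[<] (0:ℝ)) (𝓝 (f 0)) := (hc.tendsto 0).mono_left nhdsWithin_le_nhds
    refine le_of_tendsto ht ?_
    filter_upwards [self_mem_nhdsWithin] with y hy
    have hy' : y < 0 := hy
    have h := hsgn y (ne_of_lt hy')
    by_contra hpos
    push_neg at hpos
    nlinarith [mul_neg_of_neg_of_pos hy' hpos]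
  have h2 : 0 ≤ f 0 := by
    have ht : Tendsto f (𝓝[>] (0:ℝ)) (𝓝 (f 0)) := (hc.tendsto 0).mono_left nhdsWithin_le_nhds
    refine ge_of_tendsto ht ?_
    filter_upwards [self_mem_nhdsWithin] with y hy
    have hy' : 0 < y := hy
    have h := hsgn y (ne_of_gt hy')
    by_contra hneg
    push_neg at hneg
    nlinarith [mul_neg_of_pos_of_neg hy' hneg]
  linarith

lemma slope_abs_tendsto (g : ℝ → ℝ) (t d : ℝ) (hg : HasDerivAt g d t) :
    Tendsto (slope (fun u => |g u|) t) (𝓝[>] t)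
      (𝓝 (if 0 < g t then d else if g t < 0 then -d else |d|)) := by
  have hslope : Tendsto (slope g t) (𝓝[>] t) (𝓝 d) :=
    (hasDerivAt_iff_tendsto_slope.mp hg).mono_left
      (nhdsWithin_mono t (fun z hz => ne_of_gt hz))
  rcases lt_trichotomy (g t) 0 with hgt | hgt | hgt
  · rw [if_neg (by linarith), if_pos hgt]
    have hev : ∀ᶠ z in 𝓝[>] t, g z < 0 :=
      (Filter.Tendsto.eventually_lt_const hgt hg.continuousAt).filter_mono nhdsWithin_le_nhds
    apply Filter.Tendsto.congr' _ hslope.neg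
    filter_upwards [hev, self_mem_nhdsWithin] with z hz hz'
    rw [slope_def_field, slope_def_field, abs_of_neg hz, abs_of_neg hgt]
    ring
  · rw [if_neg (by rw [hgt]; exact lt_irrefl 0), if_neg (by rw [hgt]; exact lt_irrefl 0)]
    apply Filter.Tendsto.congr' _ hslope.abs
    filter_upwards [self_mem_nhdsWithin] with z hz
    rw [slope_def_field, slope_def_field, abs_div, abs_of_pos (sub_pos.mpr (show t < z from hz)), hgt,
      sub_zero, abs_zero, sub_zero]
  · rw [if_pos hgt]
    have hev : ∀ᶠ z in 𝓝[>] t, 0 < g z :=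
      (Filter.Tendsto.eventually_const_lt hgt hg.continuousAt).filter_mono nhdsWithin_le_nhds
    apply Filter.Tendsto.congr' _ hslope
    filter_upwards [hev, self_mem_nhdsWithin] with z hz hz'
    rw [slope_def_field, slope_def_field, abs_of_pos hz, abs_of_pos hgt]

lemma dini_abs_sum {n : ℕ} (y : ℝ → Fin n → ℝ) (v d : Fin n → ℝ) (t : ℝ)
    (hy : ∀ i, HasDerivAt (fun u => y u i) (d i) t) :
    Tendsto (slope (fun u => ∑ i, v i * |y u i|) t) (𝓝[>] t)
      (𝓝 (∑ i, v i * (if 0 < y t i then d i else if y t i < 0 then -d i else |d i|))) := by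
  have heq : slope (fun u => ∑ i, v i * |y u i|) t
      = fun z => ∑ i, v i * slope (fun u => |y u i|) t z := by
    funext z
    rw [slope_def_field, ← Finset.sum_sub_distrib, Finset.sum_div]
    refine Finset.sum_congr rfl fun i _ => ?_
    rw [slope_def_field]
    ring
  rw [heq]
  exact tendsto_finset_sum _ fun i _ =>
    (slope_abs_tendsto (fun u => y u i) t (d i) (hy i)).const_mul (v i)

lemma abs_sum_integral_bound {n : ℕ} (y y' : ℝ → Fin n → ℝ) (v : Fin n → ℝ)
    (G : ℝ → ℝ) (hG : Continuous G) (a b : ℝ) (hab : a ≤ b)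
    (hy : ∀ i, Continuous (fun u => y u i))
    (hy' : ∀ t ∈ Set.Ioo a b, ∀ i, HasDerivAt (fun u => y u i) (y' t i) t)
    (hbound : ∀ t ∈ Set.Ioo a b,
      (∑ i, v i * (if 0 < y t i then y' t i else if y t i < 0 then -y' t i else |y' t i|)) ≤ G t) :
    (∑ i, v i * |y b i|) - (∑ i, v i * |y a i|) ≤ ∫ u in a..b, G u := by
  rcases eq_or_lt_of_le hab with rfl | hab'
  · simp
  set W : ℝ → ℝ := fun u => ∑ i, v i * |y u i| with hWdef
  have hWc : Continuous W :=
    continuous_finset_sum _ fun i _ => continuous_const.mul (hy i).abs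
  have step : ∀ c ∈ Set.Ioc a b, W b - W c ≤ ∫ u in c..b, G u := by
    intro c hc
    have hprim : Continuous (fun x => ∫ u in c..x, G u) :=
      continuous_iff_continuousAt.mpr fun x =>
        ((hG.integral_hasStrictDerivAt c x).hasDerivAt).continuousAt
    have key := image_le_of_liminf_slope_right_le_deriv_boundary (f := W) (a := c) (b := b)
      (B := fun z => W c + ∫ u in c..z, G u) (B' := G)
      hWc.continuousOn (by simp) ((continuous_const.add hprim).continuousOn)
      (fun z _ => ((hG.integral_hasStrictDerivAt c z).hasDerivAt.const_add (W c)).hasDerivWithinAt)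
      (fun z hz r hr => by
        have hzI : z ∈ Set.Ioo a b := ⟨lt_of_lt_of_le hc.1 hz.1, hz.2⟩
        have ht := dini_abs_sum y v (y' z) z (hy' z hzI)
        exact (ht.eventually_lt_const (lt_of_le_of_lt (hbound z hzI) hr)).frequently)
    have hb := key ⟨hc.2, le_refl b⟩
    linarith
  have hne : (𝓝[Set.Ioc a b] a).NeBot := by
    rw [nhdsWithin_Ioc_eq_nhdsGT hab']; infer_instance
  have h1 : Tendsto (fun c => W b - W c) (𝓝[Set.Ioc a b] a) (𝓝 (W b - W a)) :=
    ((continuous_const.sub hWc).tendsto a).mono_left nhdsWithin_le_nhds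
  have h2 : Tendsto (fun c => ∫ u in c..b, G u) (𝓝[Set.Ioc a b] a) (𝓝 (∫ u in a..b, G u)) := by
    have := (intervalIntegral.integral_hasStrictDerivAt_left
      (hG.intervalIntegrable a b) (hG.stronglyMeasurableAtFilter _ _)
      hG.continuousAt).hasDerivAt.continuousAt
    exact (this.tendsto).mono_left nhdsWithin_le_nhds
  refine le_of_tendsto_of_tendsto h1 h2 ?_
  filter_upwards [self_mem_nhdsWithin] with c hc using step c hc


/-- Theorem 2.1: for Metzler `A s`, nonnegative `B s`, and `ν ≫ 0` with
`(A s + B r)ᵀ ν ≪ 0` for all `s, r`, there are `μ ≫ 0` and `β > 0` such that along every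
solution of every subsystem `x' = A s f(x(t)) + B s f(x(t-τ))` (any delay `τ ≥ 0`, any
admissible nonlinearity `f`) the functional
`V(t) = Σᵢ νᵢ |xᵢ(t)| + Σᵢ μᵢ ∫_{t-τ}^t |fᵢ(xᵢ(z))| dz` decreases at rate at least
`β Σⱼ |fⱼ(xⱼ(·))|`. -/
theorem stmt_1 {n N : ℕ}
    (A B : Fin N → Matrix (Fin n) (Fin n) ℝ)
    (hA : ∀ s i j, i ≠ j → 0 ≤ A s i j)
    (hB : ∀ s i j, 0 ≤ B s i j)
    (ν : Fin n → ℝ) (hν : ∀ i, 0 < ν i)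
    (h : ∀ s r i, (((A s + B r)ᵀ) *ᵥ ν) i < 0) :
    ∃ (μ : Fin n → ℝ) (β : ℝ), (∀ i, 0 < μ i) ∧ 0 < β ∧
      ∀ (s : Fin N) (τ : ℝ), 0 ≤ τ →
      ∀ f : Fin n → ℝ → ℝ, (∀ i, Continuous (f i)) →
        (∀ i y, y ≠ 0 → 0 < y * f i y) →
      ∀ x : ℝ → Fin n → ℝ, ContinuousOn x (Set.Ici (-τ)) →
        (∀ t > (0 : ℝ), HasDerivAt x
          (A s *ᵥ (fun i => f i (x t i)) + B s *ᵥ (fun i => f i (x (t - τ) i))) t) →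
      ∀ t₁ t₂ : ℝ, 0 ≤ t₁ → t₁ ≤ t₂ →
        ((∑ i, ν i * |x t₂ i|) + ∑ i, μ i * ∫ z in (t₂ - τ)..t₂, |f i (x z i)|) -
          ((∑ i, ν i * |x t₁ i|) + ∑ i, μ i * ∫ z in (t₁ - τ)..t₁, |f i (x z i)|) ≤
          -β * ∫ u in t₁..t₂, ∑ j, |f j (x u j)| := by
  rcases Nat.eq_zero_or_pos N with hN0 | hN
  · subst hN0
    exact ⟨fun _ => 1, 1, fun i => one_pos, one_pos, fun s => s.elim0⟩
  rcases Nat.eq_zero_or_pos n with hn0 | hn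
  · subst hn0
    refine ⟨fun i => i.elim0, 1, fun i => i.elim0, one_pos, ?_⟩
    intro s τ hτ f hf hsgn x hx hx' t₁ t₂ ht₁ ht₂
    simp
  have hNe : Nonempty (Fin N) := ⟨⟨0, hN⟩⟩
  have hne : Nonempty (Fin n) := ⟨⟨0, hn⟩⟩
  set M := Finset.univ.sup' Finset.univ_nonempty
    (fun p : Fin N × Fin N × Fin n => ((A p.1 + B p.2.1)ᵀ *ᵥ ν) p.2.2) with hMdef
  have hM : M < 0 := (Finset.sup'_lt_iff _).mpr (fun p _ => h p.1 p.2.1 p.2.2)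
  set β := -M / 2 with hβdef
  have hβ : 0 < β := by rw [hβdef]; linarith
  set μ : Fin n → ℝ := fun j =>
    Finset.univ.sup' Finset.univ_nonempty (fun r => ((B r)ᵀ *ᵥ ν) j) + β with hμdef
  have hBν : ∀ r j, 0 ≤ ((B r)ᵀ *ᵥ ν) j := by
    intro r j
    simp only [Matrix.mulVec, dotProduct, Matrix.transpose_apply]
    exact Finset.sum_nonneg fun i _ => mul_nonneg (hB r i j) (hν i).le
  have hμpos : ∀ j, 0 < μ j := by
    intro j
    have h1 : ((B (Classical.arbitrary (Fin N)))ᵀ *ᵥ ν) j ≤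
        Finset.univ.sup' Finset.univ_nonempty (fun r => ((B r)ᵀ *ᵥ ν) j) :=
      Finset.le_sup' (fun r => ((B r)ᵀ *ᵥ ν) j) (Finset.mem_univ _)
    have := hBν (Classical.arbitrary (Fin N)) j
    rw [hμdef]
    dsimp only
    linarith
  have hexpand : ∀ s r j, ((A s + B r)ᵀ *ᵥ ν) j = ((A s)ᵀ *ᵥ ν) j + ((B r)ᵀ *ᵥ ν) j := by
    intro s r j
    rw [Matrix.transpose_add, Matrix.add_mulVec]
    rfl
  have key1 : ∀ s j, ((A s)ᵀ *ᵥ ν) j + μ j ≤ -β := by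
    intro s j
    have hsup : Finset.univ.sup' Finset.univ_nonempty (fun r => ((B r)ᵀ *ᵥ ν) j)
        ≤ M - ((A s)ᵀ *ᵥ ν) j := by
      refine Finset.sup'_le _ _ fun r _ => ?_
      have h1 : ((A s + B r)ᵀ *ᵥ ν) j ≤ M :=
        Finset.le_sup' (f := fun p : Fin N × Fin N × Fin n => ((A p.1 + B p.2.1)ᵀ *ᵥ ν) p.2.2)
          (Finset.mem_univ (s, r, j))
      rw [hexpand] at h1
      linarith
    rw [hμdef]
    dsimp only
    rw [hβdef] at *
    linarith
  have key2 : ∀ s j, ((B s)ᵀ *ᵥ ν) j ≤ μ j := by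
    intro s j
    have h1 : ((B s)ᵀ *ᵥ ν) j ≤
        Finset.univ.sup' Finset.univ_nonempty (fun r => ((B r)ᵀ *ᵥ ν) j) :=
      Finset.le_sup' (fun r => ((B r)ᵀ *ᵥ ν) j) (Finset.mem_univ _)
    rw [hμdef]; dsimp only; linarith
  refine ⟨μ, β, hμpos, hβ, ?_⟩
  intro s τ hτ f hf hsgn x hx hx' t₁ t₂ ht₁ ht₂
  have hτ' : -τ ≤ 0 := by linarith
  -- extended solution
  set y : ℝ → Fin n → ℝ := fun u => x (max u (-τ)) with hydef
  have hyeq : ∀ u, -τ ≤ u → y u = x u := by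
    intro u hu
    rw [hydef]
    dsimp only
    rw [max_eq_left hu]
  have hyc : ∀ i, Continuous fun u => y u i := by
    intro i
    have h1 : Continuous fun u : ℝ => max u (-τ) := continuous_id.max continuous_const
    have h2 : Continuous fun u : ℝ => x (max u (-τ)) :=
      hx.comp_continuous h1 (fun u => Set.mem_Ici.mpr (le_max_right _ _))
    exact (continuous_apply i).comp h2
  set φ : Fin n → ℝ → ℝ := fun j u => |f j (y u j)| with hφdef
  have hφc : ∀ j, Continuous (φ j) := fun j => ((hf j).comp (hyc j)).abs
  have hφ0 : ∀ j u, 0 ≤ φ j u := fun j u => abs_nonneg _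
  have hφτc : ∀ j, Continuous (fun u => φ j (u - τ)) :=
    fun j => (hφc j).comp (continuous_id.sub continuous_const)
  set G : ℝ → ℝ :=
    fun u => ∑ j, (((A s)ᵀ *ᵥ ν) j * φ j u + ((B s)ᵀ *ᵥ ν) j * φ j (u - τ)) with hGdef
  have hGc : Continuous G := continuous_finset_sum _ fun j _ =>
    (continuous_const.mul (hφc j)).add (continuous_const.mul (hφτc j))
  set y' : ℝ → Fin n → ℝ := fun t =>
    A s *ᵥ (fun i => f i (y t i)) + B s *ᵥ (fun i => f i (y (t - τ) i)) with hy'def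
  have hf0 : ∀ j, f j 0 = 0 := fun j => aux_f_zero (f j) (hf j) (fun z hz => hsgn j z hz)
  -- derivative of components of y
  have hyd : ∀ t ∈ Set.Ioo t₁ t₂, ∀ i, HasDerivAt (fun u => y u i) (y' t i) t := by
    intro t ht i
    have ht0 : 0 < t := lt_of_le_of_lt ht₁ ht.1
    have hd := hx' t ht0
    have hxt : x t = y t := (hyeq t (by linarith)).symm
    have hxtτ : x (t - τ) = y (t - τ) := (hyeq (t - τ) (by linarith)).symm
    rw [hxt, hxtτ] at hd
    have hdi : HasDerivAt (fun u => x u i) (y' t i) t := (hasDerivAt_pi.mp hd) i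
    refine hdi.congr_of_eventuallyEq ?_
    have hev : ∀ᶠ u in 𝓝 t, -τ < u := eventually_gt_nhds (by linarith)
    filter_upwards [hev] with u hu
    rw [hyeq u hu.le]
  -- the pointwise Dini bound
  have hDle : ∀ t ∈ Set.Ioo t₁ t₂,
      (∑ i, ν i * (if 0 < y t i then y' t i else if y t i < 0 then -y' t i else |y' t i|))
        ≤ G t := by
    intro t ht
    have hy'eq : ∀ i, y' t i = ∑ j, (A s i j * f j (y t j) + B s i j * f j (y (t - τ) j)) := by
      intro i
      rw [hy'def]
      simp [Matrix.mulVec, dotProduct, Finset.sum_add_distrib]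
    have hper : ∀ i, (if 0 < y t i then y' t i else if y t i < 0 then -y' t i else |y' t i|)
        ≤ ∑ j, (A s i j * φ j t + B s i j * φ j (t - τ)) := by
      intro i
      split_ifs with h1 h2
      · rw [hy'eq i]
        refine Finset.sum_le_sum fun j _ => add_le_add ?_ ?_
        · rcases eq_or_ne j i with rfl | hji
          · have hfp : 0 < f j (y t j) := by
              have := hsgn j (y t j) (ne_of_gt h1); nlinarith
            rw [hφdef]; dsimp only; rw [abs_of_pos hfp]
          · exact mul_le_mul_of_nonneg_left (le_abs_self _) (hA s i j (Ne.symm hji))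
        · exact mul_le_mul_of_nonneg_left (le_abs_self _) (hB s i j)
      · rw [hy'eq i, ← Finset.sum_neg_distrib]
        refine Finset.sum_le_sum fun j _ => ?_
        rw [neg_add]
        refine add_le_add ?_ ?_
        · rw [← mul_neg]
          rcases eq_or_ne j i with rfl | hji
          · have hfn : f j (y t j) < 0 := by
              have := hsgn j (y t j) (ne_of_lt h2); nlinarith
            rw [hφdef]; dsimp only; rw [abs_of_neg hfn]
          · exact mul_le_mul_of_nonneg_left (neg_le_abs _) (hA s i j (Ne.symm hji))
        · rw [← mul_neg]
          exact mul_le_mul_of_nonneg_left (neg_le_abs _) (hB s i j)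
      · have h0 : y t i = 0 := le_antisymm (not_lt.mp h1) (not_lt.mp h2)
        rw [hy'eq i]
        calc |∑ j, (A s i j * f j (y t j) + B s i j * f j (y (t - τ) j))|
            ≤ ∑ j, |A s i j * f j (y t j) + B s i j * f j (y (t - τ) j)| :=
              Finset.abs_sum_le_sum_abs _ _
          _ ≤ ∑ j, (A s i j * φ j t + B s i j * φ j (t - τ)) := by
              refine Finset.sum_le_sum fun j _ => ?_
              refine (abs_add_le _ _).trans (add_le_add ?_ ?_)
              · rcases eq_or_ne j i with rfl | hji
                · rw [hφdef]; dsimp only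
                  rw [h0, hf0 j]
                  simp
                · rw [abs_mul, abs_of_nonneg (hA s i j (Ne.symm hji))]
              · rw [abs_mul, abs_of_nonneg (hB s i j)]
    calc (∑ i, ν i * (if 0 < y t i then y' t i else if y t i < 0 then -y' t i else |y' t i|))
        ≤ ∑ i, ν i * ∑ j, (A s i j * φ j t + B s i j * φ j (t - τ)) :=
          Finset.sum_le_sum fun i _ => mul_le_mul_of_nonneg_left (hper i) (hν i).le
      _ = G t := by
          rw [hGdef]
          simp only [Finset.mul_sum]
          rw [Finset.sum_comm]
          refine Finset.sum_congr rfl fun j _ => ?_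
          simp only [Matrix.mulVec, dotProduct, Matrix.transpose_apply]
          rw [Finset.sum_mul, Finset.sum_mul, ← Finset.sum_add_distrib]
          refine Finset.sum_congr rfl fun i _ => ?_
          ring
  have hW := abs_sum_integral_bound y y' ν G hGc t₁ t₂ ht₂ hyc hyd hDle
  set c : Fin n → ℝ := fun j => ((A s)ᵀ *ᵥ ν) j with hcdef
  set d : Fin n → ℝ := fun j => ((B s)ᵀ *ᵥ ν) j with hddef
  have hφint : ∀ j (p q : ℝ), IntervalIntegrable (φ j) MeasureTheory.volume p q :=
    fun j p q => (hφc j).intervalIntegrable p q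
  have hφτint : ∀ j (p q : ℝ),
      IntervalIntegrable (fun u => φ j (u - τ)) MeasureTheory.volume p q :=
    fun j p q => (hφτc j).intervalIntegrable p q
  set I1 : Fin n → ℝ := fun j => ∫ u in t₁..t₂, φ j u with hI1def
  set I2 : Fin n → ℝ := fun j => ∫ u in t₁..t₂, φ j (u - τ) with hI2def
  have hI1nn : ∀ j, 0 ≤ I1 j := fun j =>
    intervalIntegral.integral_nonneg ht₂ (fun u _ => hφ0 j u)
  have hI2nn : ∀ j, 0 ≤ I2 j := fun j =>
    intervalIntegral.integral_nonneg ht₂ (fun u _ => hφ0 j (u - τ))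
  have hstepA : ∀ j, (∫ z in (t₂ - τ)..t₂, φ j z) - (∫ z in (t₁ - τ)..t₁, φ j z)
      = I1 j - I2 j := by
    intro j
    have e1 := intervalIntegral.integral_add_adjacent_intervals
      (hφint j (t₁ - τ) t₁) (hφint j t₁ t₂)
    have e2 := intervalIntegral.integral_add_adjacent_intervals
      (hφint j (t₁ - τ) (t₂ - τ)) (hφint j (t₂ - τ) t₂)
    have e3 : I2 j = ∫ z in (t₁ - τ)..(t₂ - τ), φ j z := by
      simp only [hI2def]
      exact intervalIntegral.integral_comp_sub_right (φ j) τ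
    rw [e3]
    linarith
  have hxint : ∀ (t : ℝ), 0 ≤ t → ∀ j,
      (∫ z in (t - τ)..t, |f j (x z j)|) = ∫ z in (t - τ)..t, φ j z := by
    intro t htt j
    refine intervalIntegral.integral_congr fun z hz => ?_
    rw [Set.uIcc_of_le (by linarith)] at hz
    rw [hφdef]
    dsimp only
    rw [hyeq z (by linarith [hz.1])]
  have hxabs : ∀ (t : ℝ), 0 ≤ t → ∀ i, |x t i| = |y t i| := fun t htt i => by
    rw [hyeq t (by linarith)]
  have hstepD : (∫ u in t₁..t₂, G u) = ∑ j, (c j * I1 j + d j * I2 j) := by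
    rw [hGdef]
    rw [intervalIntegral.integral_finset_sum
      (fun j _ => ((hφint j t₁ t₂).const_mul _).add ((hφτint j t₁ t₂).const_mul _))]
    refine Finset.sum_congr rfl fun j _ => ?_
    rw [intervalIntegral.integral_add ((hφint j t₁ t₂).const_mul _)
      ((hφτint j t₁ t₂).const_mul _),
      intervalIntegral.integral_const_mul, intervalIntegral.integral_const_mul]
  have hstepF : (∫ u in t₁..t₂, ∑ j, |f j (x u j)|) = ∑ j, I1 j := by
    have e : (∫ u in t₁..t₂, ∑ j, |f j (x u j)|) = ∫ u in t₁..t₂, ∑ j, φ j u := by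
      refine intervalIntegral.integral_congr fun z hz => ?_
      rw [Set.uIcc_of_le ht₂] at hz
      refine Finset.sum_congr rfl fun j _ => ?_
      rw [hφdef]; dsimp only; rw [hyeq z (by linarith [hz.1, ht₁])]
    rw [e, intervalIntegral.integral_finset_sum (fun j _ => hφint j t₁ t₂)]
  have hLHS : ((∑ i, ν i * |x t₂ i|) + ∑ i, μ i * ∫ z in (t₂ - τ)..t₂, |f i (x z i)|) -
      ((∑ i, ν i * |x t₁ i|) + ∑ i, μ i * ∫ z in (t₁ - τ)..t₁, |f i (x z i)|)
      = ((∑ i, ν i * |y t₂ i|) - (∑ i, ν i * |y t₁ i|)) + ∑ j, μ j * (I1 j - I2 j) := by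
    have e2 : ∀ i, |x t₂ i| = |y t₂ i| := hxabs t₂ (le_trans ht₁ ht₂)
    have e1 : ∀ i, |x t₁ i| = |y t₁ i| := hxabs t₁ ht₁
    have e4 : ∀ i, (∫ z in (t₂ - τ)..t₂, |f i (x z i)|) = ∫ z in (t₂ - τ)..t₂, φ i z :=
      hxint t₂ (le_trans ht₁ ht₂)
    have e3 : ∀ i, (∫ z in (t₁ - τ)..t₁, |f i (x z i)|) = ∫ z in (t₁ - τ)..t₁, φ i z :=
      hxint t₁ ht₁
    simp only [e1, e2, e3, e4]
    have e5 : (∑ i, μ i * ∫ z in (t₂ - τ)..t₂, φ i z) -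
        (∑ i, μ i * ∫ z in (t₁ - τ)..t₁, φ i z) = ∑ j, μ j * (I1 j - I2 j) := by
      rw [← Finset.sum_sub_distrib]
      refine Finset.sum_congr rfl fun j _ => ?_
      rw [← mul_sub, hstepA j]
    linarith
  rw [hLHS]
  have h1 : ∑ j, (c j * I1 j + d j * I2 j) + ∑ j, μ j * (I1 j - I2 j)
      ≤ ∑ j, (-β) * I1 j := by
    rw [← Finset.sum_add_distrib]
    refine Finset.sum_le_sum fun j _ => ?_
    have k1 := key1 s j
    have k2 := key2 s j
    have p1 := mul_le_mul_of_nonneg_right k1 (hI1nn j)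
    have p2 := mul_le_mul_of_nonneg_right k2 (hI2nn j)
    nlinarith [p1, p2]
  rw [hstepD] at hW
  calc ((∑ i, ν i * |y t₂ i|) - (∑ i, ν i * |y t₁ i|)) + ∑ j, μ j * (I1 j - I2 j)
      ≤ (∑ j, (c j * I1 j + d j * I2 j)) + ∑ j, μ j * (I1 j - I2 j) := by linarith
    _ ≤ ∑ j, (-β) * I1 j := h1
    _ = -β * ∫ u in t₁..t₂, ∑ j, |f j (x u j)| := by
        rw [hstepF, Finset.mul_sum]
end

section
/- Let A = [[−2,0],[0,−2]], B₁ = [[1,1],[1,0]], B₂ = [[0,1],[3,0]], and let B̄ = [[1,1],[3,0]] be the entrywise maximum of B₁ and B₂. Then there exists no vector ν ∈ ℝ² with ν ≫ 0 such that (A + B̄)^T ν ≪ 0. -/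
open Matrix

/-- Example 2.1, first claim: for `A = [[-2,0],[0,-2]]` and the entrywise maximum
`B̄ = [[1,1],[3,0]]` of `B₁` and `B₂`, there is no strictly positive vector `ν` with
`(A + B̄)ᵀ ν ≪ 0`. -/
theorem stmt_2 :
    ¬ ∃ ν : Fin 2 → ℝ, (∀ i, 0 < ν i) ∧
      (∀ i, (((!![(-2 : ℝ), 0; 0, -2] + !![(1 : ℝ), 1; 3, 0])ᵀ) *ᵥ ν) i < 0) := by
  rintro ⟨ν, hpos, hneg⟩
  have h0 := hneg 0
  have h1 := hneg 1
  have p1 := hpos 1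
  simp [mulVec, dotProduct, Fin.sum_univ_two, Matrix.add_apply] at h0 h1
  linarith
end

section
/- Let A^(1),…,A^(N) ∈ ℝ^{n×n} be arbitrary matrices and, for each r ∈ {1,…,l}, let B_r^(1),…,B_r^(N) ∈ ℝ^{n×n} be nonnegative matrices. Suppose there exists a vector ν ≫ 0 such that (A^(s) + B_1^(p_1) + ⋯ + B_l^(p_l))^T ν ≪ 0 for all indices s, p_1,…,p_l ∈ {1,…,N}. Then there exist vectors μ_1,…,μ_l ∈ ℝ^n with μ_r ≫ 0 for each r such that (A^(s))^T ν + μ_1 + ⋯ + μ_l ≪ 0 and (B_r^(s))^T ν ≪ μ_r for all s ∈ {1,…,N} and all r ∈ {1,…,l}. -/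
open Matrix

/-- Algebraic core of Theorem 2.2 (several delays): if the `B r` matrices are nonnegative
and `(A s + B₁^(p₁) + ⋯ + B_l^(p_l))ᵀ ν ≪ 0` for a strictly positive vector `ν` and all
index choices, then there exist strictly positive vectors `μ₁, …, μ_l` with
`(A s)ᵀ ν + μ₁ + ⋯ + μ_l ≪ 0` and `(B_r^(s))ᵀ ν ≪ μ_r` for all `s, r`. -/
theorem stmt_5 {n N l : ℕ}
    (A : Fin N → Matrix (Fin n) (Fin n) ℝ)
    (B : Fin l → Fin N → Matrix (Fin n) (Fin n) ℝ)
    (hB : ∀ r s i j, 0 ≤ B r s i j)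
    (ν : Fin n → ℝ) (hν : ∀ i, 0 < ν i)
    (h : ∀ (s : Fin N) (p : Fin l → Fin N) (i : Fin n),
      (((A s + ∑ r, B r (p r))ᵀ) *ᵥ ν) i < 0) :
    ∃ μ : Fin l → Fin n → ℝ, (∀ r i, 0 < μ r i) ∧
      (∀ s i, ((A s)ᵀ *ᵥ ν) i + ∑ r, μ r i < 0) ∧
      (∀ s r i, ((B r s)ᵀ *ᵥ ν) i < μ r i) := by
  rcases Nat.eq_zero_or_pos N with hN | hN
  · subst hN
    exact ⟨fun _ _ => 1, fun r i => one_pos, fun s => s.elim0, fun s => s.elim0⟩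
  haveI : Nonempty (Fin N) := ⟨⟨0, hN⟩⟩
  have hne : (Finset.univ : Finset (Fin N)).Nonempty := Finset.univ_nonempty
  -- M r i : max over s of ((B r s)ᵀ ν) i
  set M : Fin l → Fin n → ℝ :=
    fun r i => Finset.univ.sup' hne (fun s => ((B r s)ᵀ *ᵥ ν) i) with hM
  have hM0 : ∀ r i, 0 ≤ M r i := by
    intro r i
    refine le_trans ?_ (Finset.le_sup' (fun s => ((B r s)ᵀ *ᵥ ν) i)
      (Finset.mem_univ (Classical.arbitrary (Fin N))))
    simp only [mulVec, dotProduct, transpose_apply]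
    exact Finset.sum_nonneg fun j _ =>
      mul_nonneg (hB r _ j i) (hν j).le
  have hMle : ∀ r s i, ((B r s)ᵀ *ᵥ ν) i ≤ M r i := fun r s i =>
    Finset.le_sup' (fun s => ((B r s)ᵀ *ᵥ ν) i) (Finset.mem_univ s)
  -- key: for each s i, (A s)ᵀν i + ∑ r, M r i < 0
  have key : ∀ s i, ((A s)ᵀ *ᵥ ν) i + ∑ r, M r i < 0 := by
    intro s i
    -- choose p r attaining the sup for coordinate i
    have hex : ∀ r : Fin l, ∃ s₀ : Fin N, M r i = ((B r s₀)ᵀ *ᵥ ν) i := by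
      intro r
      obtain ⟨s₀, _, hs₀⟩ := Finset.exists_mem_eq_sup' hne
        (fun s => ((B r s)ᵀ *ᵥ ν) i)
      exact ⟨s₀, hs₀⟩
    choose p hp using hex
    have hh := h s p i
    have expand : (((A s + ∑ r, B r (p r))ᵀ) *ᵥ ν) i
        = ((A s)ᵀ *ᵥ ν) i + ∑ r, ((B r (p r))ᵀ *ᵥ ν) i := by
      simp only [mulVec, dotProduct, transpose_apply, Matrix.add_apply,
        Matrix.sum_apply, add_mul, Finset.sum_mul, Finset.sum_add_distrib]
      rw [Finset.sum_comm]
    rw [expand] at hh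
    calc ((A s)ᵀ *ᵥ ν) i + ∑ r, M r i
        = ((A s)ᵀ *ᵥ ν) i + ∑ r, ((B r (p r))ᵀ *ᵥ ν) i := by
          congr 1; exact Finset.sum_congr rfl fun r _ => hp r
      _ < 0 := hh
  -- G i : max over s of the above
  set G : Fin n → ℝ :=
    fun i => Finset.univ.sup' hne (fun s => ((A s)ᵀ *ᵥ ν) i + ∑ r, M r i) with hG
  have hGneg : ∀ i, G i < 0 := by
    intro i
    exact (Finset.sup'_lt_iff hne).2 fun s _ => key s i
  have hGle : ∀ s i, ((A s)ᵀ *ᵥ ν) i + ∑ r, M r i ≤ G i := fun s i =>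
    Finset.le_sup' (fun s => ((A s)ᵀ *ᵥ ν) i + ∑ r, M r i) (Finset.mem_univ s)
  set ε : Fin n → ℝ := fun i => (-G i) / (l + 1) with hε
  have hεpos : ∀ i, 0 < ε i := fun i => by
    apply div_pos (by linarith [hGneg i]) (by positivity)
  refine ⟨fun r i => M r i + ε i, ?_, ?_, ?_⟩
  · intro r i
    dsimp only
    have := hM0 r i; have := hεpos i; linarith
  · intro s i
    have hsum : ∑ r : Fin l, (M r i + ε i) = (∑ r, M r i) + l * ε i := by
      rw [Finset.sum_add_distrib, Finset.sum_const, Finset.card_univ,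
        Fintype.card_fin, nsmul_eq_mul]
    rw [hsum]
    have h1 := hGle s i
    have h2 := hGneg i
    have h3 : (l : ℝ) * ε i = l * (-G i) / (l + 1) := by
      rw [hε]; ring
    have h4 : ((A s)ᵀ *ᵥ ν) i + ((∑ r, M r i) + l * ε i)
        ≤ G i + l * (-G i) / (l + 1) := by rw [h3]; linarith
    have h5 : G i + (l : ℝ) * (-G i) / (l + 1) = G i / (l + 1) := by
      field_simp; ring
    have h6 : G i / ((l : ℝ) + 1) < 0 :=
      div_neg_of_neg_of_pos h2 (by positivity)
    linarith
  · intro s r i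
    dsimp only
    have := hMle r s i; have := hεpos i; linarith
end

section
/- Let D ∈ ℝ^{m×m} be a nonnegative matrix that is Schur-Cohn stable. Then there exists a vector v ∈ ℝ^m with v ≫ 0 such that D^T v ≪ v, i.e., (D − I)^T v ≪ 0. -/
open Matrix

attribute [local instance] Matrix.linftyOpNormedRing Matrix.linftyOpNormedAlgebra
  Matrix.linftyOpNormedSpace

lemma pow_nonneg_entries {m : ℕ} (D : Matrix (Fin m) (Fin m) ℝ)
    (hD : ∀ i j, 0 ≤ D i j) (n : ℕ) : ∀ i j, 0 ≤ (D ^ n) i j := by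
  induction n with
  | zero => intro i j; by_cases h : i = j <;> simp [pow_zero, Matrix.one_apply, h]
  | succ k ih =>
      intro i j
      rw [pow_succ, Matrix.mul_apply]
      exact Finset.sum_nonneg fun l _ => mul_nonneg (ih i l) (hD l j)

/-- A nonnegative Schur-Cohn stable matrix `D` (all eigenvalues of modulus less than one)
admits a strictly positive vector `v` with `Dᵀ v ≪ v`, i.e. `(D − I)ᵀ v ≪ 0`. -/
theorem stmt_6 {m : ℕ}
    (D : Matrix (Fin m) (Fin m) ℝ)
    (hD : ∀ i j, 0 ≤ D i j)
    (hSchur : ∀ z ∈ spectrum ℂ (D.map (algebraMap ℝ ℂ)), ‖z‖ < 1) :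
    ∃ v : Fin m → ℝ, (∀ i, 0 < v i) ∧ (∀ i, (Dᵀ *ᵥ v) i < v i) := by
  set A : Matrix (Fin m) (Fin m) ℂ := D.map (algebraMap ℝ ℂ) with hA
  -- spectral radius of A is < 1
  have hsr : spectralRadius ℂ A < 1 := by
    rcases (spectrum ℂ A).eq_empty_or_nonempty with h | h
    · simp [spectralRadius, h]
    · have := spectrum.spectralRadius_lt_of_forall_lt_of_nonempty (𝕜 := ℂ) h
        (r := 1) (fun k hk => by
          have := hSchur k hk
          rw [← NNReal.coe_lt_coe]
          simpa using this)
      simpa using this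
  -- Gelfand: get n ≥ 1 with ‖A ^ n‖₊ < 1
  obtain ⟨n, hn1, hn⟩ : ∃ n : ℕ, 1 ≤ n ∧ ‖A ^ n‖₊ < 1 := by
    have hG := spectrum.pow_nnnorm_pow_one_div_tendsto_nhds_spectralRadius A
    have hev : ∀ᶠ n : ℕ in Filter.atTop,
        ((‖A ^ n‖₊ : ENNReal)) ^ ((1 : ℝ) / n) < 1 := hG.eventually_lt_const hsr
    obtain ⟨n, hn⟩ := (hev.and (Filter.eventually_ge_atTop 1)).exists
    refine ⟨n, hn.2, ?_⟩
    by_contra hge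
    push_neg at hge
    have h1 : (1 : ENNReal) ≤ (‖A ^ n‖₊ : ENNReal) := by exact_mod_cast hge
    have h2 : (1 : ENNReal) ≤ ((‖A ^ n‖₊ : ENNReal)) ^ ((1 : ℝ) / n) := by
      calc (1 : ENNReal) = (1 : ENNReal) ^ ((1 : ℝ) / n) := (ENNReal.one_rpow _).symm
        _ ≤ _ := ENNReal.rpow_le_rpow h1 (by positivity)
    exact absurd hn.1 (not_lt.mpr h2)
  -- take a further power to make the norm small
  obtain ⟨k, hk1, hk⟩ : ∃ k : ℕ, 1 ≤ k ∧ ‖A ^ (n * k)‖ < 1 / (m + 1) := by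
    have hn' : ‖A ^ n‖ < 1 := hn
    have hlim : Filter.Tendsto (fun k : ℕ => (‖A ^ n‖ : ℝ) ^ k) Filter.atTop (nhds 0) :=
      tendsto_pow_atTop_nhds_zero_of_lt_one (norm_nonneg _) hn'
    have hev := hlim.eventually_lt_const (show (0:ℝ) < 1 / (m + 1) by positivity)
    obtain ⟨k, hk⟩ := (hev.and (Filter.eventually_ge_atTop 1)).exists
    refine ⟨k, hk.2, lt_of_le_of_lt ?_ hk.1⟩
    rw [pow_mul]
    exact norm_pow_le' _ (lt_of_lt_of_le one_pos hk.2)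
  set N := n * k with hN
  have hN1 : 1 ≤ N := Nat.one_le_iff_ne_zero.mpr (by positivity)
  -- entrywise bound on D ^ N
  have hentry : ∀ i j, (D ^ N) i j < 1 / (m + 1) := by
    intro i j
    have hmap : A ^ N = (D ^ N).map (algebraMap ℝ ℂ) := by
      rw [hA]
      exact (map_pow ((algebraMap ℝ ℂ).mapMatrix) D N).symm
    have hb : ‖(A ^ N) i j‖₊ ≤ ‖A ^ N‖₊ := by
      rw [Matrix.linfty_opNNNorm_def]
      calc ‖(A ^ N) i j‖₊ ≤ ∑ l, ‖(A ^ N) i l‖₊ :=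
            Finset.single_le_sum (f := fun l => ‖(A ^ N) i l‖₊) (fun l _ => zero_le) (Finset.mem_univ j)
        _ ≤ _ := Finset.le_sup (f := fun i => ∑ l, ‖(A ^ N) i l‖₊) (Finset.mem_univ i)
    have hb' : ‖(A ^ N) i j‖ ≤ ‖A ^ N‖ := hb
    have he : ‖(A ^ N) i j‖ = (D ^ N) i j := by
      rw [hmap]
      simp only [Matrix.map_apply, Complex.coe_algebraMap]
      rw [Complex.norm_real, Real.norm_eq_abs,
        abs_of_nonneg (pow_nonneg_entries D hD N i j)]
    rw [← he]
    exact lt_of_le_of_lt hb' hk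
  -- define v
  set f : ℕ → Fin m → ℝ := fun p => (Dᵀ) ^ p *ᵥ (fun _ => 1) with hf
  have hfnn : ∀ p i, 0 ≤ f p i := by
    intro p i
    have ht : (Dᵀ) ^ p = (D ^ p)ᵀ := (Matrix.transpose_pow D p).symm
    simp only [hf, ht, Matrix.mulVec, dotProduct, mul_one]
    exact Finset.sum_nonneg fun j _ => by
      simpa using pow_nonneg_entries D hD p j i
  refine ⟨fun i => ∑ p ∈ Finset.range N, f p i, ?_, ?_⟩
  · intro i
    have h0 : f 0 i = 1 := by simp [hf]
    calc (0:ℝ) < 1 := one_pos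
      _ = f 0 i := h0.symm
      _ ≤ ∑ p ∈ Finset.range N, f p i :=
          Finset.single_le_sum (fun p _ => hfnn p i) (Finset.mem_range.mpr hN1)
  · intro i
    have hstep : ∀ p, (Dᵀ *ᵥ f p) = f (p + 1) := by
      intro p
      rw [hf]
      simp only []
      rw [Matrix.mulVec_mulVec, ← pow_succ']
    have hlin : (Dᵀ *ᵥ fun j => ∑ p ∈ Finset.range N, f p j) i
        = ∑ p ∈ Finset.range N, (Dᵀ *ᵥ f p) i := by
      simp only [Matrix.mulVec, dotProduct]
      rw [Finset.sum_comm]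
      congr 1
      ext j
      rw [Finset.mul_sum]
    have hfN : f N i < 1 := by
      have : f N i = ∑ j, (D ^ N) j i := by
        rw [hf]
        simp only [Matrix.mulVec, dotProduct, mul_one]
        congr 1
        ext j
        rw [← Matrix.transpose_pow]
        rfl
      rw [this]
      calc ∑ j, (D ^ N) j i ≤ ∑ _j : Fin m, 1 / ((m:ℝ) + 1) :=
            Finset.sum_le_sum (fun j _ => le_of_lt (hentry j i))
        _ = m / ((m:ℝ) + 1) := by
            rw [Finset.sum_const]
            simp [div_eq_mul_inv]
        _ < 1 := by
            rw [div_lt_one (by positivity)]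
            linarith
    rw [hlin]
    have : ∑ p ∈ Finset.range N, (Dᵀ *ᵥ f p) i = ∑ p ∈ Finset.range N, f (p + 1) i := by
      refine Finset.sum_congr rfl fun p _ => ?_
      rw [hstep p]
    rw [this]
    have hsum : ∑ p ∈ Finset.range N, f (p + 1) i
        = (∑ p ∈ Finset.range N, f p i) + f N i - f 0 i := by
      have h1 := Finset.sum_range_succ (fun p => f p i) N
      have h2 := Finset.sum_range_succ' (fun p => f p i) N
      rw [h1] at h2
      linarith
    rw [hsum]
    have h0 : f 0 i = 1 := by simp [hf]
    rw [h0]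
    linarith
end

section
/- Let A ∈ ℝ^{n×n} be a Metzler matrix, B ∈ ℝ^{n×m}, C ∈ ℝ^{m×n}, D ∈ ℝ^{m×m} be nonnegative matrices, suppose D is Schur-Cohn stable and A + B(I − D)^{-1}C is Hurwitz. Then there exist vectors ν ∈ ℝ^n and μ ∈ ℝ^m with ν ≫ 0 and μ ≫ 0 such that A^T ν + C^T μ ≪ 0 and B^T ν + (D − I)^T μ ≪ 0. -/
open Matrix Filter Finset

attribute [local instance] Matrix.linftyOpNormedRing Matrix.linftyOpNormedAlgebra

section AuxLemmas

variable {p : ℕ}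

lemma abs_entry_le_norm (M : Matrix (Fin p) (Fin p) ℝ) (i j : Fin p) : |M i j| ≤ ‖M‖ := by
  have h1 : ‖M i j‖₊ ≤ ∑ k, ‖M i k‖₊ := Finset.single_le_sum (f := fun k => ‖M i k‖₊) (fun k _ => zero_le) (mem_univ j)
  have h2 : (∑ k, ‖M i k‖₊) ≤ Finset.univ.sup fun i => ∑ k, ‖M i k‖₊ :=
    Finset.le_sup (f := fun i => ∑ k, ‖M i k‖₊) (mem_univ i)
  have := (h1.trans h2)
  rw [Matrix.linfty_opNorm_def]
  exact_mod_cast this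

lemma mul_entries_nonneg {q r : ℕ} {M : Matrix (Fin p) (Fin q) ℝ} {N : Matrix (Fin q) (Fin r) ℝ}
    (hM : ∀ i j, 0 ≤ M i j) (hN : ∀ i j, 0 ≤ N i j) : ∀ i j, 0 ≤ (M * N) i j := by
  intro i j
  rw [Matrix.mul_apply]
  exact Finset.sum_nonneg fun k _ => mul_nonneg (hM i k) (hN k j)

lemma pow_entries_nonneg {M : Matrix (Fin p) (Fin p) ℝ} (hM : ∀ i j, 0 ≤ M i j) (k : ℕ) :
    ∀ i j, 0 ≤ (M ^ k) i j := by
  induction k with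
  | zero => intro i j; rw [pow_zero]; by_cases h : i = j <;> simp [Matrix.one_apply, h]
  | succ k ih => rw [pow_succ]; exact mul_entries_nonneg ih hM

lemma geom_entries_nonneg {M : Matrix (Fin p) (Fin p) ℝ} (hM : ∀ i j, 0 ≤ M i j) (N : ℕ) :
    ∀ i j, 0 ≤ (∑ k ∈ Finset.range N, M ^ k) i j := by
  intro i j
  rw [Matrix.sum_apply]
  exact Finset.sum_nonneg fun k _ => pow_entries_nonneg hM k i j

lemma geom_entries_diag {M : Matrix (Fin p) (Fin p) ℝ} (hM : ∀ i j, 0 ≤ M i j) {N : ℕ}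
    (hN : 1 ≤ N) (i : Fin p) : 1 ≤ (∑ k ∈ Finset.range N, M ^ k) i i := by
  rw [Matrix.sum_apply]
  have : ((M ^ 0) i i : ℝ) ≤ ∑ k ∈ Finset.range N, (M ^ k) i i :=
    Finset.single_le_sum (fun k _ => pow_entries_nonneg hM k i i)
      (Finset.mem_range.mpr (by omega))
  simpa [Matrix.one_apply] using this


lemma L0 (Y : Matrix (Fin p) (Fin p) ℝ) (hY : ∀ i j, 0 ≤ Y i j) (h : ‖Y‖ < 1) :
    IsUnit (1 - Y) ∧ (∀ i j, 0 ≤ (1 - Y)⁻¹ i j) ∧ (∀ i, 1 ≤ (1 - Y)⁻¹ i i) := by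
  have hu : IsUnit (1 - Y) := (Units.oneSub Y h).isUnit
  set R := (1 - Y)⁻¹ with hR
  have h1 : (1 - Y) * R = 1 := Matrix.mul_nonsing_inv _ ((Matrix.isUnit_iff_isUnit_det _).mp hu)
  have hY0 : 0 ≤ ‖Y‖ := norm_nonneg _
  -- identity R = geom sum + error
  have ident : ∀ N : ℕ, R = (∑ k ∈ Finset.range N, Y ^ k) + Y ^ N * R := by
    intro N
    have h2 : (∑ k ∈ Finset.range N, Y ^ k) * (1 - Y) = 1 - Y ^ N := by
      have h3 := geom_sum_mul Y N
      have h4 : (∑ k ∈ Finset.range N, Y ^ k) * (1 - Y)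
          = -((∑ k ∈ Finset.range N, Y ^ k) * (Y - 1)) := by
        rw [mul_sub, mul_sub, mul_one]; abel
      rw [h4, h3, neg_sub]
    have h5 : (∑ k ∈ Finset.range N, Y ^ k) = R - Y ^ N * R := by
      calc (∑ k ∈ Finset.range N, Y ^ k)
          = (∑ k ∈ Finset.range N, Y ^ k) * ((1 - Y) * R) := by rw [h1, mul_one]
        _ = ((∑ k ∈ Finset.range N, Y ^ k) * (1 - Y)) * R := by rw [mul_assoc]
        _ = (1 - Y ^ N) * R := by rw [h2]
        _ = R - Y ^ N * R := by rw [sub_mul, one_mul]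
    rw [h5]; abel
  -- error bound
  have key : ∀ ε : ℝ, 0 < ε → ∃ N : ℕ, 1 ≤ N ∧ ∀ i j, |(Y ^ N * R) i j| < ε := by
    intro ε hε
    have : ∃ N : ℕ, ‖Y‖ ^ N * ‖R‖ < ε := by
      rcases lt_or_ge ‖R‖ ε with hc | hc
      · exact ⟨0, by simpa using hc⟩
      · have hRpos : 0 < ‖R‖ := lt_of_lt_of_le hε hc
        obtain ⟨N, hN⟩ := exists_pow_lt_of_lt_one (div_pos hε hRpos) h
        exact ⟨N, by rwa [← lt_div_iff₀ hRpos]⟩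
    obtain ⟨N, hN⟩ := this
    refine ⟨N + 1, by omega, fun i j => ?_⟩
    have hb : |(Y ^ (N + 1) * R) i j| ≤ ‖Y ^ (N + 1) * R‖ := abs_entry_le_norm _ i j
    have hb2 : ‖Y ^ (N + 1) * R‖ ≤ ‖Y‖ ^ (N + 1) * ‖R‖ :=
      (norm_mul_le _ _).trans (by gcongr; exact norm_pow_le' Y (by omega))
    have hb3 : ‖Y‖ ^ (N + 1) * ‖R‖ ≤ ‖Y‖ ^ N * ‖R‖ := by
      apply mul_le_mul_of_nonneg_right _ (norm_nonneg _)
      exact pow_le_pow_of_le_one hY0 h.le (by omega)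
    linarith
  refine ⟨hu, fun i j => ?_, fun i => ?_⟩
  · refine le_of_forall_pos_le_add fun ε hε => ?_
    obtain ⟨N, hN1, hN⟩ := key ε hε
    have := ident N
    have hRij : R i j = (∑ k ∈ Finset.range N, Y ^ k) i j + (Y ^ N * R) i j := by
      conv_lhs => rw [this]
      simp [Matrix.add_apply]
    have h6 := geom_entries_nonneg hY N i j
    have h7 := abs_lt.mp (hN i j)
    linarith
  · refine le_of_forall_pos_le_add fun ε hε => ?_
    obtain ⟨N, hN1, hN⟩ := key ε hε
    have := ident N
    have hRii : R i i = (∑ k ∈ Finset.range N, Y ^ k) i i + (Y ^ N * R) i i := by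
      conv_lhs => rw [this]
      simp [Matrix.add_apply]
    have h6 := geom_entries_diag hY hN1 i
    have h7 := abs_lt.mp (hN i i)
    linarith

lemma norm_map_complex (M : Matrix (Fin p) (Fin p) ℝ) :
    ‖M.map (algebraMap ℝ ℂ)‖ = ‖M‖ := by
  rw [Matrix.linfty_opNorm_def, Matrix.linfty_opNorm_def]
  congr 1
  apply Finset.sup_congr rfl
  intro i _
  apply Finset.sum_congr rfl
  intro j _
  simp [Matrix.map_apply, Complex.nnnorm_real]

lemma exists_pow_norm_lt (X : Matrix (Fin p) (Fin p) ℝ)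
    (h : ∀ z ∈ spectrum ℂ (X.map (algebraMap ℝ ℂ)), ‖z‖ < 1) :
    ∃ K : ℕ, 1 ≤ K ∧ ‖X ^ K‖ < 1 := by
  rcases isEmpty_or_nonempty (Fin p) with hp | hp
  · refine ⟨1, le_refl 1, ?_⟩
    have : X ^ 1 = 0 := by
      ext i j
      exact absurd i.isLt (by simpa using hp.elim i)
    rw [this]
    simpa using one_pos
  · set X' := X.map (algebraMap ℝ ℂ) with hX'
    have hrad : spectralRadius ℂ X' < 1 := by
      obtain ⟨z, hz, he⟩ := spectrum.exists_nnnorm_eq_spectralRadius X'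
      rw [← he]
      have : ‖z‖ < 1 := by simpa using h z hz
      exact_mod_cast this
    have htd := spectrum.pow_nnnorm_pow_one_div_tendsto_nhds_spectralRadius X'
    have hev : ∀ᶠ k : ℕ in atTop, (‖X' ^ k‖₊ : ENNReal) ^ (1 / (k : ℝ)) < 1 :=
      htd.eventually_lt_const hrad
    obtain ⟨K, hK1, hK⟩ := ((eventually_ge_atTop 1).and hev).exists
    refine ⟨K, hK1, ?_⟩
    have hKn : ‖X' ^ K‖₊ < 1 := by
      by_contra hcon
      push_neg at hcon
      have h1 : (1 : ENNReal) = (1 : ENNReal) ^ (1 / (K : ℝ)) := (ENNReal.one_rpow _).symm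
      have h2 : (1 : ENNReal) ^ (1 / (K : ℝ)) ≤ (‖X' ^ K‖₊ : ENNReal) ^ (1 / (K : ℝ)) := by
        apply ENNReal.rpow_le_rpow _ (by positivity)
        exact_mod_cast hcon
      exact absurd (h1 ▸ h2) (not_le.mpr hK)
    have heq : ‖X ^ K‖ = ‖X' ^ K‖ := by
      rw [hX']
      have : (X.map (algebraMap ℝ ℂ)) ^ K = (X ^ K).map (algebraMap ℝ ℂ) := by
        have := map_pow ((algebraMap ℝ ℂ).mapMatrix) X K
        simpa [RingHom.mapMatrix_apply] using this.symm
      rw [this, norm_map_complex]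
    rw [heq]
    exact_mod_cast hKn

lemma L1 (X : Matrix (Fin p) (Fin p) ℝ) (hX : ∀ i j, 0 ≤ X i j)
    (h : ∀ z ∈ spectrum ℂ (X.map (algebraMap ℝ ℂ)), ‖z‖ < 1) :
    IsUnit (1 - X) ∧ (∀ i j, 0 ≤ (1 - X)⁻¹ i j) ∧ (∀ i, 1 ≤ (1 - X)⁻¹ i i) := by
  obtain ⟨K, hK1, hK⟩ := exists_pow_norm_lt X h
  obtain ⟨huK, hRK0, hRKd⟩ := L0 (X ^ K) (pow_entries_nonneg hX K) hK
  set RK := (1 - X ^ K)⁻¹ with hRK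
  have h1 : (1 - X ^ K) * RK = 1 :=
    Matrix.mul_nonsing_inv _ ((Matrix.isUnit_iff_isUnit_det _).mp huK)
  set S := ∑ k ∈ Finset.range K, X ^ k with hS
  have hgeom : (1 - X) * S = 1 - X ^ K := by
    have h3 := mul_geom_sum X K
    have h4 : (1 - X) * S = -((X - 1) * S) := by rw [sub_mul, sub_mul, one_mul]; abel
    rw [h4, hS, h3]; abel
  have hright : (1 - X) * (S * RK) = 1 := by rw [← mul_assoc, hgeom, h1]
  have hu : IsUnit (1 - X) := (Matrix.isUnit_iff_isUnit_det _).mpr (Matrix.isUnit_det_of_right_inverse hright)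
  have hinv : (1 - X)⁻¹ = S * RK := Matrix.inv_eq_right_inv hright
  refine ⟨hu, ?_, ?_⟩
  · rw [hinv]
    exact mul_entries_nonneg (geom_entries_nonneg hX K) hRK0
  · intro i
    rw [hinv]
    have hterm : (1 : ℝ) ≤ S i i * RK i i :=
      one_le_mul_of_one_le_of_one_le (geom_entries_diag hX hK1 i) (hRKd i)
    calc (1 : ℝ) ≤ S i i * RK i i := hterm
      _ ≤ ∑ l, S i l * RK l i := Finset.single_le_sum
          (f := fun l => S i l * RK l i)
          (fun l _ => mul_nonneg (geom_entries_nonneg hX K i l) (hRK0 l i)) (Finset.mem_univ i)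
      _ = (S * RK) i i := (Matrix.mul_apply).symm

lemma L2 {n : ℕ} (M : Matrix (Fin n) (Fin n) ℝ) (hM : ∀ i j, i ≠ j → 0 ≤ M i j)
    (hH : ∀ z ∈ spectrum ℂ (M.map (algebraMap ℝ ℂ)), z.re < 0) :
    ∃ ν : Fin n → ℝ, (∀ i, 0 < ν i) ∧ ∀ i, (∑ j, M j i * ν j) < 0 := by
  rcases isEmpty_or_nonempty (Fin n) with hn | hn
  · exact ⟨fun _ => 1, fun i => hn.elim i, fun i => hn.elim i⟩
  set M' := M.map (algebraMap ℝ ℂ) with hM'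
  -- find a bound s₀ for |z|²/(-2 re z) on the spectrum
  have hcpt : IsCompact (spectrum ℂ M') := spectrum.isCompact M'
  have hne : (spectrum ℂ M').Nonempty := spectrum.nonempty M'
  set g : ℂ → ℝ := fun z => Complex.normSq z / (-2 * z.re) with hg
  have hgc : ContinuousOn g (spectrum ℂ M') := by
    apply ContinuousOn.div
    · exact Complex.continuous_normSq.continuousOn
    · exact (continuous_const.mul Complex.continuous_re).continuousOn
    · intro z hz
      have := hH z hz
      nlinarith
  obtain ⟨z₀, _, hz₀'⟩ := hcpt.exists_isMaxOn hne hgc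
  have hz₀ : ∀ z ∈ spectrum ℂ M', g z ≤ g z₀ := fun z hz => hz₀' hz
  set s : ℝ := max (g z₀) ‖M‖ + 1 with hs
  have hspos : 0 < s := by
    have := norm_nonneg M
    have := le_max_right (g z₀) ‖M‖
    linarith
  have hsM : ‖M‖ < s := by
    have := le_max_right (g z₀) ‖M‖; linarith
  have hsg : ∀ z ∈ spectrum ℂ M', g z < s := by
    intro z hz
    have h1 := hz₀ z hz
    have := le_max_left (g z₀) ‖M‖
    linarith
  -- key spectral bound
  have habs : ∀ z ∈ spectrum ℂ M', ‖z + (s : ℂ)‖ < s := by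
    intro z hz
    have hre : z.re < 0 := hH z hz
    have hden : 0 < -2 * z.re := by linarith
    have hgz : Complex.normSq z < s * (-2 * z.re) := by
      have := hsg z hz
      rw [hg] at this
      simp only at this
      calc Complex.normSq z = (Complex.normSq z / (-2 * z.re)) * (-2 * z.re) :=
            (div_mul_cancel₀ _ hden.ne').symm
        _ < s * (-2 * z.re) := by
            apply mul_lt_mul_of_pos_right this hden
    have hsq : (‖z + (s : ℂ)‖) ^ 2 < s ^ 2 := by
      rw [Complex.sq_norm, Complex.normSq_apply]
      simp only [Complex.add_re, Complex.add_im, Complex.ofReal_re, Complex.ofReal_im]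
      have hnsq : Complex.normSq z = z.re * z.re + z.im * z.im := Complex.normSq_apply z
      nlinarith
    exact lt_of_pow_lt_pow_left₀ 2 hspos.le hsq
  -- the nonnegative matrix X
  set P : Matrix (Fin n) (Fin n) ℝ := M + s • 1 with hP
  set X : Matrix (Fin n) (Fin n) ℝ := s⁻¹ • P with hX
  have hXnn : ∀ i j, 0 ≤ X i j := by
    intro i j
    have hPnn : 0 ≤ P i j := by
      rcases eq_or_ne i j with rfl | hij
      · have : -M i i ≤ |M i i| := neg_le_abs _
        have h2 := abs_entry_le_norm M i i
        simp only [hP, Matrix.add_apply, Matrix.smul_apply, Matrix.one_apply_eq, smul_eq_mul,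
          mul_one]
        linarith
      · simp only [hP, Matrix.add_apply, Matrix.smul_apply, Matrix.one_apply_ne hij,
          smul_eq_mul, mul_zero, add_zero]
        exact hM i j hij
    exact mul_nonneg (inv_nonneg.mpr hspos.le) hPnn
  -- spectrum of X lies in the unit disk
  have hXmap : X.map (algebraMap ℝ ℂ) = ((s⁻¹ : ℝ) : ℂ) • (M' + algebraMap ℂ _ (s : ℂ)) := by
    ext i j
    simp only [hX, hP, Matrix.map_apply, Matrix.smul_apply, Matrix.add_apply, hM',
      Algebra.algebraMap_eq_smul_one, Matrix.smul_apply, Matrix.one_apply, smul_eq_mul,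
      mul_ite, mul_one, mul_zero, apply_ite (algebraMap ℝ ℂ), _root_.map_mul, map_add, map_zero,
      Complex.coe_algebraMap, Complex.ofReal_inv]
    rcases eq_or_ne i j with rfl | hij
    · simp
    · simp [hij]
  have hXspec : ∀ z ∈ spectrum ℂ (X.map (algebraMap ℝ ℂ)), ‖z‖ < 1 := by
    intro z hz
    rw [hXmap] at hz
    have hsne : ((s⁻¹ : ℝ) : ℂ) ≠ 0 := by
      simp only [ne_eq, Complex.ofReal_eq_zero]
      exact inv_ne_zero hspos.ne'
    rw [show ((s⁻¹ : ℝ) : ℂ) • (M' + algebraMap ℂ _ (s : ℂ))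
        = (Units.mk0 _ hsne : ℂˣ) • (M' + algebraMap ℂ _ (s : ℂ)) from rfl,
      spectrum.unit_smul_eq_smul] at hz
    obtain ⟨w, hw, hzw⟩ := hz
    rw [add_comm M' _, ← spectrum.singleton_add_eq, Set.singleton_add] at hw
    obtain ⟨v, hv, hvw⟩ := hw
    have habs' := habs v hv
    have : z = ((s⁻¹ : ℝ) : ℂ) * ((s : ℂ) + v) := by
      rw [← hzw, ← hvw]; rfl
    rw [this, norm_mul]
    have h1 : ‖((s⁻¹ : ℝ) : ℂ)‖ = s⁻¹ := by
      rw [Complex.norm_real, Real.norm_eq_abs, abs_of_pos (inv_pos.mpr hspos)]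
    rw [h1, add_comm]
    calc s⁻¹ * ‖v + (s : ℂ)‖ < s⁻¹ * s :=
          mul_lt_mul_of_pos_left habs' (inv_pos.mpr hspos)
      _ = 1 := inv_mul_cancel₀ hspos.ne'
  obtain ⟨huX, hR0, hRd⟩ := L1 X hXnn hXspec
  set R : Matrix (Fin n) (Fin n) ℝ := (1 - X)⁻¹ with hR
  have h1X : (1 : Matrix (Fin n) (Fin n) ℝ) - X = (-s⁻¹) • M := by
    have hsmul : s⁻¹ • ((s : ℝ) • (1 : Matrix (Fin n) (Fin n) ℝ)) = 1 := by
      rw [smul_smul, inv_mul_cancel₀ hspos.ne', one_smul]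
    rw [hX, hP, smul_add, hsmul, neg_smul]
    abel
  have hRmul : R * (1 - X) = 1 :=
    Matrix.nonsing_inv_mul _ ((Matrix.isUnit_iff_isUnit_det _).mp huX)
  have hRM : R * M = (-s) • 1 := by
    have h2 : R * ((-s⁻¹) • M) = 1 := by rw [← h1X]; exact hRmul
    rw [mul_smul_comm] at h2
    have h3 := congrArg (fun Z => (-s) • Z) h2
    simp only [smul_smul] at h3
    have h4 : (-s) * (-s⁻¹) = 1 := by field_simp
    rw [h4, one_smul] at h3
    exact h3
  refine ⟨fun i => ∑ j, R j i, fun i => ?_, fun i => ?_⟩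
  · have h5 : R i i ≤ ∑ j, R j i :=
      Finset.single_le_sum (f := fun j => R j i) (fun j _ => hR0 j i) (Finset.mem_univ i)
    have := hRd i
    linarith
  · have hcalc : (∑ j, M j i * ∑ l, R l j) = ∑ l, (R * M) l i := by
      simp_rw [Finset.mul_sum]
      rw [Finset.sum_comm]
      apply Finset.sum_congr rfl
      intro l _
      rw [Matrix.mul_apply]
      exact Finset.sum_congr rfl fun j _ => by ring
    have hfin : (∑ l, ((-s : ℝ) • (1 : Matrix (Fin n) (Fin n) ℝ)) l i) = -s := by
      simp [Matrix.smul_apply, Matrix.one_apply]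
    calc (∑ j, M j i * ∑ l, R l j) = ∑ l, (R * M) l i := hcalc
      _ = ∑ l, ((-s : ℝ) • (1 : Matrix (Fin n) (Fin n) ℝ)) l i := by rw [hRM]
      _ = -s := hfin
      _ < 0 := by linarith

end AuxLemmas

/-- Algebraic core of Theorem 3.1: for `A` Metzler, `B`, `C`, `D` nonnegative, `D`
Schur-Cohn stable and `A + B (I − D)⁻¹ C` Hurwitz, there exist strictly positive vectors
`ν`, `μ` with `Aᵀ ν + Cᵀ μ ≪ 0` and `Bᵀ ν + (D − I)ᵀ μ ≪ 0`. -/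
theorem stmt_8 {n m : ℕ}
    (A : Matrix (Fin n) (Fin n) ℝ) (B : Matrix (Fin n) (Fin m) ℝ)
    (C : Matrix (Fin m) (Fin n) ℝ) (D : Matrix (Fin m) (Fin m) ℝ)
    (hA : ∀ i j, i ≠ j → 0 ≤ A i j)
    (hB : ∀ i j, 0 ≤ B i j) (hC : ∀ i j, 0 ≤ C i j) (hD : ∀ i j, 0 ≤ D i j)
    (hSchur : ∀ z ∈ spectrum ℂ (D.map (algebraMap ℝ ℂ)), ‖z‖ < 1)
    (hHurwitz : ∀ z ∈ spectrum ℂ ((A + B * (1 - D)⁻¹ * C).map (algebraMap ℝ ℂ)),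
      z.re < 0) :
    ∃ (ν : Fin n → ℝ) (μ : Fin m → ℝ), (∀ i, 0 < ν i) ∧ (∀ i, 0 < μ i) ∧
      (∀ i, (Aᵀ *ᵥ ν) i + (Cᵀ *ᵥ μ) i < 0) ∧
      (∀ i, (Bᵀ *ᵥ ν) i + (((D - 1)ᵀ) *ᵥ μ) i < 0) := by
  obtain ⟨huQ, hQ0, hQd⟩ := L1 D hD hSchur
  set Q : Matrix (Fin m) (Fin m) ℝ := (1 - D)⁻¹ with hQ
  have hQr : Q * (1 - D) = 1 :=
    Matrix.nonsing_inv_mul _ ((Matrix.isUnit_iff_isUnit_det _).mp huQ)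
  have hQm : Q * (D - 1) = -(1 : Matrix (Fin m) (Fin m) ℝ) := by
    have : D - 1 = -(1 - D) := by abel
    rw [this, mul_neg, hQr]
  set M : Matrix (Fin n) (Fin n) ℝ := A + B * Q * C with hM
  have hBQC : ∀ i j, 0 ≤ (B * Q * C) i j :=
    mul_entries_nonneg (mul_entries_nonneg hB hQ0) hC
  have hMetz : ∀ i j, i ≠ j → 0 ≤ M i j := by
    intro i j hij
    have := hA i j hij
    have := hBQC i j
    simp only [hM, Matrix.add_apply]
    linarith
  obtain ⟨ν, hν, hMν⟩ := L2 M hMetz hHurwitz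
  set c : Fin n → ℝ := fun i => ∑ k, (Q * C) k i with hc
  have hc0 : ∀ i, 0 ≤ c i := fun i =>
    Finset.sum_nonneg fun k _ => mul_entries_nonneg hQ0 hC k i
  set d : Fin n → ℝ := fun i => -(∑ j, M j i * ν j) with hd
  have hd0 : ∀ i, 0 < d i := fun i => by have := hMν i; simp only [hd]; linarith
  have hεex : ∃ ε : ℝ, 0 < ε ∧ ∀ i, ε * c i < d i := by
    rcases isEmpty_or_nonempty (Fin n) with h | h
    · exact ⟨1, one_pos, fun i => h.elim i⟩
    · obtain ⟨i₀, _, hi₀⟩ := Finset.exists_min_image Finset.univ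
        (fun i => d i / (1 + c i)) Finset.univ_nonempty
      refine ⟨d i₀ / (1 + c i₀), div_pos (hd0 i₀) (by have := hc0 i₀; linarith), fun i => ?_⟩
      have h1 : d i₀ / (1 + c i₀) ≤ d i / (1 + c i) := hi₀ i (Finset.mem_univ i)
      have h2 : d i / (1 + c i) * c i < d i := by
        have hpos : 0 < 1 + c i := by have := hc0 i; linarith
        rw [div_mul_eq_mul_div, div_lt_iff₀ hpos]
        nlinarith [hd0 i, hc0 i]
      calc (d i₀ / (1 + c i₀)) * c i ≤ (d i / (1 + c i)) * c i :=
            mul_le_mul_of_nonneg_right h1 (hc0 i)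
        _ < d i := h2
  obtain ⟨ε, hε, hεc⟩ := hεex
  set w : Fin m → ℝ := fun j => (∑ l, B l j * ν l) + ε with hw
  have hw0 : ∀ j, 0 < w j := fun j => by
    have : 0 ≤ ∑ l, B l j * ν l :=
      Finset.sum_nonneg fun l _ => mul_nonneg (hB l j) (hν l).le
    simp only [hw]; linarith
  set μ : Fin m → ℝ := fun i => ∑ j, Q j i * w j with hμ
  have hμ0 : ∀ i, 0 < μ i := by
    intro i
    apply Finset.sum_pos' (fun j _ => mul_nonneg (hQ0 j i) (hw0 j).le)
    exact ⟨i, Finset.mem_univ i, mul_pos (by have := hQd i; linarith) (hw0 i)⟩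
  refine ⟨ν, μ, hν, hμ0, ?_, ?_⟩
  · intro i
    have hstepA : ∑ j, C j i * μ j = ∑ k, (Q * C) k i * w k := by
      simp only [hμ]
      simp_rw [Finset.mul_sum]
      rw [Finset.sum_comm]
      apply Finset.sum_congr rfl
      intro k _
      rw [Matrix.mul_apply, Finset.sum_mul]
      exact Finset.sum_congr rfl fun j _ => by ring
    have hstepB : ∑ k, (Q * C) k i * w k
        = (∑ k, (Q * C) k i * (∑ l, B l k * ν l)) + ε * c i := by
      simp only [hw, mul_add]
      rw [Finset.sum_add_distrib, hc, Finset.mul_sum]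
      congr 1
      exact Finset.sum_congr rfl fun k _ => by ring
    have hstepC : ∑ k, (Q * C) k i * (∑ l, B l k * ν l)
        = ∑ l, (B * Q * C) l i * ν l := by
      simp_rw [Finset.mul_sum]
      rw [Finset.sum_comm]
      apply Finset.sum_congr rfl
      intro l _
      rw [Matrix.mul_assoc, Matrix.mul_apply, Finset.sum_mul]
      exact Finset.sum_congr rfl fun k _ => by ring
    have hMsum : ∑ j, M j i * ν j = ∑ j, A j i * ν j + ∑ l, (B * Q * C) l i * ν l := by
      rw [← Finset.sum_add_distrib]
      exact Finset.sum_congr rfl fun j _ => by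
        simp only [hM, Matrix.add_apply]; ring
    have hεi := hεc i
    have hdi : d i = -(∑ j, M j i * ν j) := rfl
    have hgoal : (Aᵀ *ᵥ ν) i + (Cᵀ *ᵥ μ) i
        = ∑ j, A j i * ν j + ∑ j, C j i * μ j := by
      simp [Matrix.mulVec, dotProduct, Matrix.transpose_apply]
    rw [hgoal, hstepA, hstepB, hstepC]
    have := hMν i
    linarith [hMsum]
  · intro i
    have hstepD : ∑ j, (D - 1) j i * μ j = -(w i) := by
      simp only [hμ]
      simp_rw [Finset.mul_sum]
      rw [Finset.sum_comm]
      have : ∀ k, ∑ j, (D - 1) j i * (Q k j * w k) = (Q * (D - 1)) k i * w k := by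
        intro k
        rw [Matrix.mul_apply, Finset.sum_mul]
        exact Finset.sum_congr rfl fun j _ => by ring
      rw [Finset.sum_congr rfl fun k _ => this k]
      rw [hQm]
      have : ∀ k, (-(1 : Matrix (Fin m) (Fin m) ℝ)) k i * w k
          = (if k = i then -(w k) else 0) := by
        intro k
        simp [Matrix.one_apply]
        split_ifs <;> ring
      rw [Finset.sum_congr rfl fun k _ => this k, Finset.sum_ite_eq' Finset.univ i]
      simp
    have hgoal : (Bᵀ *ᵥ ν) i + ((D - 1)ᵀ *ᵥ μ) i
        = ∑ l, B l i * ν l + ∑ j, (D - 1) j i * μ j := by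
      simp [Matrix.mulVec, dotProduct, Matrix.transpose_apply]
    rw [hgoal, hstepD, hw]
    simp only
    linarith
end

section
/- Let A^(s), B^(s), D ∈ ℝ^{n×n} for s ∈ {1,…,N}, and define Ã^(s), B̃^(s), D̃ entrywise by ã^(s)_{ii} = a^(s)_{ii}, ã^(s)_{ij} = |a^(s)_{ij}| for i ≠ j, b̃^(s)_{ij} = |b^(s)_{ij}|, d̃_{ij} = |d_{ij}|. Suppose ν, μ ∈ ℝ^n with ν ≫ 0, μ ≫ 0 and β > 0 satisfy (B̃^(s))^T ν + (D̃ − I)^T μ ≪ 0 and (Ã^(s))^T ν + μ ≤ −βe for all s, where e is the all-ones vector. Then for every s ∈ {1,…,N}, every τ ≥ 0, and every continuous x : [−τ,∞) → ℝ^n such that t ↦ x(t) − Dx(t−τ) is differentiable on (0,∞) and satisfies d/dt[x(t) − Dx(t−τ)] = A^(s)(x(t) − Dx(t−τ)) + B^(s)x(t−τ) for t > 0, the functional V(t) = Σ_{i=1}^n ν_i |x_i(t) − Σ_{k=1}^n d_{ik}x_k(t−τ)| + Σ_{j=1}^n μ_j ∫_{t−τ}^{t} |x_j(z)| dz satisfies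 V(t₂) − V(t₁) ≤ −β ∫_{t₁}^{t₂} Σ_{j=1}^n |x_j(u) − Σ_{k=1}^n d_{jk}x_k(u−τ)| du for all 0 ≤ t₁ ≤ t₂. -/
open Matrix

private lemma abs_le_sqrt_aux (v ε : ℝ) : |v| ≤ Real.sqrt (v ^ 2 + ε ^ 2) := by
  rw [← Real.sqrt_sq_eq_abs]
  exact Real.sqrt_le_sqrt (by nlinarith [sq_nonneg ε])

private lemma sqrt_le_abs_add_aux (v ε : ℝ) (hε : 0 ≤ ε) :
    Real.sqrt (v ^ 2 + ε ^ 2) ≤ |v| + ε := by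
  have h : v ^ 2 + ε ^ 2 ≤ (|v| + ε) ^ 2 := by
    nlinarith [abs_nonneg v, sq_abs v]
  calc Real.sqrt (v ^ 2 + ε ^ 2) ≤ Real.sqrt ((|v| + ε) ^ 2) := Real.sqrt_le_sqrt h
    _ = |v| + ε := Real.sqrt_sq (by positivity)

private lemma sqrt_pos_aux (v ε : ℝ) (hε : 0 < ε) : 0 < Real.sqrt (v ^ 2 + ε ^ 2) :=
  Real.sqrt_pos.2 (by positivity)

private lemma diag_term_aux (c v ε : ℝ) (hε : 0 < ε) :
    c * (v * v) / Real.sqrt (v ^ 2 + ε ^ 2) ≤ c * |v| + |c| * ε := by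
  set s := Real.sqrt (v ^ 2 + ε ^ 2) with hs
  have hspos : 0 < s := sqrt_pos_aux v ε hε
  have h1 : |v| ≤ s := abs_le_sqrt_aux v ε
  have h2 : s ≤ |v| + ε := sqrt_le_abs_add_aux v ε hε.le
  rw [div_le_iff₀ hspos]
  have hvv : v * v = |v| * |v| := by rw [← abs_mul_abs_self]
  have hs2 : s ^ 2 = |v| ^ 2 + ε ^ 2 := by
    rw [hs, Real.sq_sqrt (by positivity), sq_abs]
  have hεs : ε ≤ s := by
    have h := abs_le_sqrt_aux ε v
    rw [abs_of_nonneg hε.le] at h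
    calc ε ≤ Real.sqrt (ε ^ 2 + v ^ 2) := h
      _ = s := by rw [hs, add_comm]
  rcases le_or_gt 0 c with hc | hc
  · rw [abs_of_nonneg hc]
    nlinarith [abs_nonneg v, mul_le_mul_of_nonneg_left h1 (mul_nonneg hc (abs_nonneg v)),
      mul_nonneg (mul_nonneg hc hε.le) hspos.le]
  · rw [abs_of_neg hc]
    nlinarith [mul_nonneg (sub_nonneg.2 h1) hspos.le, mul_nonneg (sub_nonneg.2 hεs) hε.le,
      mul_le_mul_of_nonneg_left (mul_nonneg (sub_nonneg.2 h1) hspos.le) (neg_nonneg.2 hc.le),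
      mul_le_mul_of_nonneg_left (mul_nonneg (sub_nonneg.2 hεs) hε.le) (neg_nonneg.2 hc.le)]

private lemma off_term_aux (a v q ε : ℝ) (hε : 0 < ε) :
    a * (v * q) / Real.sqrt (v ^ 2 + ε ^ 2) ≤ |a| * |q| := by
  set s := Real.sqrt (v ^ 2 + ε ^ 2) with hs
  have hspos : 0 < s := sqrt_pos_aux v ε hε
  have h1 : |v| ≤ s := abs_le_sqrt_aux v ε
  rw [div_le_iff₀ hspos]
  have : a * (v * q) ≤ |a| * |v| * |q| := by
    calc a * (v * q) ≤ |a * (v * q)| := le_abs_self _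
      _ = |a| * |v| * |q| := by rw [abs_mul, abs_mul]; ring
  nlinarith [abs_nonneg a, abs_nonneg q, mul_nonneg (abs_nonneg a) (abs_nonneg q)]

private lemma sqrt_comp_deriv_aux {f : ℝ → ℝ} {d t ε : ℝ} (hε : 0 < ε)
    (hf : HasDerivAt f d t) :
    HasDerivAt (fun u => Real.sqrt ((f u) ^ 2 + ε ^ 2))
      (f t * d / Real.sqrt ((f t) ^ 2 + ε ^ 2)) t := by
  have hpos : (0:ℝ) < (f t) ^ 2 + ε ^ 2 := by positivity
  have hinner : HasDerivAt (fun u => (f u) ^ 2 + ε ^ 2) (2 * f t ^ 1 * d) t :=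
    (hf.pow 2).add_const _
  have houter := (Real.hasDerivAt_sqrt hpos.ne').comp t hinner
  refine houter.congr_deriv ?_
  have hsne : Real.sqrt ((f t) ^ 2 + ε ^ 2) ≠ 0 := (sqrt_pos_aux _ _ hε).ne'
  field_simp

/-- Lyapunov-Krasovskii decrease inequality from the proof of Theorem 4.1 (neutral
systems).  With the auxiliary matrices `Ã s`, `B̃ s`, `D̃` (entrywise absolute values,
diagonal of `A` kept), if `ν ≫ 0`, `μ ≫ 0`, `β > 0` satisfy
`(B̃ s)ᵀ ν + (D̃ − I)ᵀ μ ≪ 0` and `(Ã s)ᵀ ν + μ ≤ -β e`, then along every solution of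
`d/dt [x(t) − D x(t-τ)] = A s (x(t) − D x(t-τ)) + B s x(t-τ)` the functional
`V(t) = Σᵢ νᵢ |xᵢ(t) − Σₖ d_{ik} xₖ(t-τ)| + Σⱼ μⱼ ∫_{t-τ}^t |xⱼ(z)| dz` decreases at
rate at least `β Σⱼ |xⱼ(·) − Σₖ d_{jk} xₖ(·-τ)|`. -/
theorem stmt_13 {n N : ℕ}
    (A B : Fin N → Matrix (Fin n) (Fin n) ℝ) (D : Matrix (Fin n) (Fin n) ℝ)
    (Atil Btil : Fin N → Matrix (Fin n) (Fin n) ℝ) (Dtil : Matrix (Fin n) (Fin n) ℝ)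
    (hAtil : ∀ s i j, Atil s i j = if i = j then A s i j else |A s i j|)
    (hBtil : ∀ s i j, Btil s i j = |B s i j|)
    (hDtil : ∀ i j, Dtil i j = |D i j|)
    (ν μ : Fin n → ℝ) (β : ℝ)
    (hν : ∀ i, 0 < ν i) (hμ : ∀ i, 0 < μ i) (hβ : 0 < β)
    (hBD : ∀ s i, ((Btil s)ᵀ *ᵥ ν) i + (((Dtil - 1)ᵀ) *ᵥ μ) i < 0)
    (hAμ : ∀ s i, ((Atil s)ᵀ *ᵥ ν) i + μ i ≤ -β) :
    ∀ (s : Fin N) (τ : ℝ), 0 ≤ τ →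
    ∀ x : ℝ → Fin n → ℝ, ContinuousOn x (Set.Ici (-τ)) →
      (∀ t > (0 : ℝ), HasDerivAt (fun t => x t - D *ᵥ x (t - τ))
        (A s *ᵥ (x t - D *ᵥ x (t - τ)) + B s *ᵥ x (t - τ)) t) →
    ∀ t₁ t₂ : ℝ, 0 ≤ t₁ → t₁ ≤ t₂ →
      ((∑ i, ν i * |x t₂ i - ∑ k, D i k * x (t₂ - τ) k|) +
          ∑ j, μ j * ∫ z in (t₂ - τ)..t₂, |x z j|) -
        ((∑ i, ν i * |x t₁ i - ∑ k, D i k * x (t₁ - τ) k|) +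
          ∑ j, μ j * ∫ z in (t₁ - τ)..t₁, |x z j|) ≤
        -β * ∫ u in t₁..t₂, ∑ j, |x u j - ∑ k, D j k * x (u - τ) k| := by
  intro s τ hτ x hxc hode t₁ t₂ ht₁ ht12
  -- simp-normalized hypotheses
  have hAμ' : ∀ j, (∑ i, Atil s i j * ν i) + μ j ≤ -β := by
    intro j
    have h := hAμ s j
    rw [show ((Atil s)ᵀ *ᵥ ν) j = ∑ i, Atil s i j * ν i by
      simp [Matrix.mulVec, dotProduct, Matrix.transpose_apply]] at h
    exact h
  have hBD' : ∀ k, (∑ i, Btil s i k * ν i) + ((∑ j, Dtil j k * μ j) - μ k) < 0 := by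
    intro k
    have h := hBD s k
    rw [show ((Btil s)ᵀ *ᵥ ν) k = ∑ i, Btil s i k * ν i by
      simp [Matrix.mulVec, dotProduct, Matrix.transpose_apply],
      show (((Dtil - 1)ᵀ) *ᵥ μ) k = (∑ j, Dtil j k * μ j) - μ k by
      simp [Matrix.mulVec, dotProduct, Matrix.transpose_apply, Matrix.sub_apply,
        Matrix.one_apply, sub_mul, Finset.sum_sub_distrib]] at h
    linarith
  -- continuous extension of x to all of ℝ
  set xb : ℝ → Fin n → ℝ := fun t => x (max t (-τ)) with hxbdef
  have hxbc : Continuous xb := by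
    apply hxc.comp_continuous (continuous_id.max continuous_const)
    intro t; exact Set.mem_Ici.2 (le_max_right _ _)
  have hxbeq : ∀ t, -τ ≤ t → xb t = x t := by
    intro t ht
    simp only [hxbdef]
    rw [max_eq_left ht]
  have hxbj : ∀ j, Continuous fun t => xb t j := fun j => (continuous_apply j).comp hxbc
  -- the solution components
  set w : Fin n → ℝ → ℝ := fun i t => xb t i - ∑ k, D i k * xb (t - τ) k with hwdef
  have hwc : ∀ i, Continuous (w i) := by
    intro i
    exact (hxbj i).sub (continuous_finset_sum _ fun k _ =>
      continuous_const.mul ((hxbj k).comp (continuous_id.sub continuous_const)))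
  -- ODE for the components of w
  have hwd : ∀ t, 0 < t → ∀ i, HasDerivAt (w i)
      ((∑ j, A s i j * w j t) + ∑ j, B s i j * xb (t - τ) j) t := by
    intro t ht i
    have hev : (fun u => xb u - D *ᵥ xb (u - τ)) =ᶠ[nhds t]
        (fun u => x u - D *ᵥ x (u - τ)) := by
      filter_upwards [eventually_gt_nhds ht] with u hu
      rw [hxbeq u (by linarith), hxbeq (u - τ) (by linarith)]
    have hd : HasDerivAt (fun u => xb u - D *ᵥ xb (u - τ))
        (A s *ᵥ (x t - D *ᵥ x (t - τ)) + B s *ᵥ x (t - τ)) t :=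
      (hode t ht).congr_of_eventuallyEq hev
    have hi := hasDerivAt_pi.1 hd i
    have hxt : x t = xb t := (hxbeq t (by linarith)).symm
    have hxtτ : x (t - τ) = xb (t - τ) := (hxbeq (t - τ) (by linarith)).symm
    refine hi.congr_deriv ?_
    rw [hxt, hxtτ]
    simp [hwdef, Matrix.mulVec, dotProduct]
  -- primitives of |xb · j|
  set G : Fin n → ℝ → ℝ := fun j t => ∫ z in (-τ)..t, |xb z j| with hGdef
  have hGd : ∀ j t, HasDerivAt (G j) |xb t j| t := fun j t =>
    ((hxbj j).abs.integral_hasStrictDerivAt (-τ) t).hasDerivAt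
  have hGc : ∀ j, Continuous (G j) :=
    fun j => continuous_iff_continuousAt.2 fun t => (hGd j t).continuousAt
  -- the Lyapunov functional and decay rate
  set W : ℝ → ℝ := fun u => ∑ j, |w j u| with hWdef
  have hWc : Continuous W := continuous_finset_sum _ fun j _ => (hwc j).abs
  set V : ℝ → ℝ := fun t => (∑ i, ν i * |w i t|) + ∑ j, μ j * (G j t - G j (t - τ)) with hVdef
  have hVc : Continuous V := by
    apply Continuous.add
    · exact continuous_finset_sum _ fun i _ => continuous_const.mul (hwc i).abs
    · exact continuous_finset_sum _ fun j _ => continuous_const.mul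
        ((hGc j).sub ((hGc j).comp (continuous_id.sub continuous_const)))
  set C : ℝ := ∑ i, ν i * |A s i i| with hCdef
  have hC0 : 0 ≤ C := Finset.sum_nonneg fun i _ => mul_nonneg (hν i).le (abs_nonneg _)
  set Sν : ℝ := ∑ i, ν i with hSνdef
  have hSν0 : 0 ≤ Sν := Finset.sum_nonneg fun i _ => (hν i).le
  -- the key decay estimate, away from 0
  have key : ∀ a, 0 < a → a ≤ t₂ → V t₂ - V a ≤ -β * ∫ u in a..t₂, W u := by
    intro a ha hat
    have hεstep : ∀ ε : ℝ, 0 < ε →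
        V t₂ - V a ≤ -β * (∫ u in a..t₂, W u) + ε * (C * (t₂ - a) + Sν) := by
      intro ε hε
      set sf : Fin n → ℝ → ℝ := fun i t => Real.sqrt ((w i t) ^ 2 + ε ^ 2) with hsfdef
      have hsfc : ∀ i, Continuous (sf i) := fun i =>
        Real.continuous_sqrt.comp (((hwc i).pow 2).add continuous_const)
      have hsflb : ∀ i t, |w i t| ≤ sf i t := fun i t => abs_le_sqrt_aux _ _
      have hsfub : ∀ i t, sf i t ≤ |w i t| + ε := fun i t => sqrt_le_abs_add_aux _ _ hε.le
      set f : ℝ → ℝ := fun t => (∑ i, ν i * sf i t) + ∑ j, μ j * (G j t - G j (t - τ))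
        with hfdef
      set Bp : ℝ → ℝ := fun u => -β * W u + ε * C with hBpdef
      have hBpc : Continuous Bp := (continuous_const.mul hWc).add continuous_const
      set fd : ℝ → ℝ := fun u => (∑ i, ν i *
          (w i u * ((∑ j, A s i j * w j u) + ∑ j, B s i j * xb (u - τ) j) / sf i u)) +
          ∑ j, μ j * (|xb u j| - |xb (u - τ) j|) with hfddef
      have hfderiv : ∀ u, 0 < u → HasDerivAt f (fd u) u := by
        intro u hu
        apply HasDerivAt.add
        · refine HasDerivAt.fun_sum fun i _ => ?_
          exact (sqrt_comp_deriv_aux hε (hwd u hu i)).const_mul (ν i)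
        · refine HasDerivAt.fun_sum fun j _ => ?_
          have h2 : HasDerivAt (fun t => G j (t - τ)) |xb (u - τ) j| u := by
            exact (hGd j (u - τ)).comp_sub_const u τ
          exact ((hGd j u).sub h2).const_mul (μ j)
      -- the pointwise derivative bound
      have hbound : ∀ u, fd u ≤ Bp u := by
        intro u
        set p : Fin n → ℝ := fun j => |xb (u - τ) j| with hpdef
        have hp0 : ∀ j, 0 ≤ p j := fun j => abs_nonneg _
        have hA : ∀ i, w i u * ((∑ j, A s i j * w j u) + ∑ j, B s i j * xb (u - τ) j) / sf i u
            ≤ (∑ j, Atil s i j * |w j u|) + (∑ j, Btil s i j * p j) + |A s i i| * ε := by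
          intro i
          have hnum : w i u * ((∑ j, A s i j * w j u) + ∑ j, B s i j * xb (u - τ) j)
              = (∑ j, A s i j * (w i u * w j u)) + ∑ j, B s i j * (w i u * xb (u - τ) j) := by
            rw [mul_add, Finset.mul_sum, Finset.mul_sum]
            congr 1 <;> exact Finset.sum_congr rfl fun j _ => by ring
          rw [hnum, add_div, Finset.sum_div, Finset.sum_div]
          have hA1 : ∑ j, A s i j * (w i u * w j u) / sf i u
              ≤ ∑ j, (Atil s i j * |w j u| + if j = i then |A s i i| * ε else 0) := by
            apply Finset.sum_le_sum
            intro j _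
            by_cases hji : j = i
            · subst hji
              rw [if_pos rfl, hAtil s j j, if_pos rfl]
              exact diag_term_aux _ _ _ hε
            · rw [if_neg hji, hAtil s i j, if_neg (fun h => hji h.symm), add_zero]
              exact off_term_aux _ _ _ _ hε
          have hA2 : ∑ j, (Atil s i j * |w j u| + if j = i then |A s i i| * ε else 0)
              = (∑ j, Atil s i j * |w j u|) + |A s i i| * ε := by
            rw [Finset.sum_add_distrib]
            congr 1
            simp
          have hB1 : ∑ j, B s i j * (w i u * xb (u - τ) j) / sf i u ≤ ∑ j, Btil s i j * p j := by
            apply Finset.sum_le_sum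
            intro j _
            rw [hBtil s i j]
            exact off_term_aux _ _ _ _ hε
          rw [hA2] at hA1
          linarith
        have hxdec : ∀ j, xb u j = w j u + ∑ k, D j k * xb (u - τ) k := by
          intro j; simp [hwdef]
        have hSstep : ∀ j, |xb u j| - p j ≤ |w j u| + (∑ k, Dtil j k * p k) - p j := by
          intro j
          have h1 : |xb u j| ≤ |w j u| + ∑ k, Dtil j k * p k := by
            rw [hxdec j]
            refine (abs_add_le _ _).trans ?_
            apply add_le_add_right
            refine (Finset.abs_sum_le_sum_abs _ _).trans ?_
            apply Finset.sum_le_sum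
            intro k _
            rw [abs_mul, hDtil j k]
          linarith
        -- assemble
        have step1 : fd u ≤ (∑ i, ν i * ((∑ j, Atil s i j * |w j u|) + (∑ j, Btil s i j * p j)
            + |A s i i| * ε)) + ∑ j, μ j * (|w j u| + (∑ k, Dtil j k * p k) - p j) := by
          apply add_le_add
          · exact Finset.sum_le_sum fun i _ => mul_le_mul_of_nonneg_left (hA i) (hν i).le
          · exact Finset.sum_le_sum fun j _ => mul_le_mul_of_nonneg_left (hSstep j) (hμ j).le
        have e1 : ∑ i, ν i * (∑ j, Atil s i j * |w j u|)
            = ∑ j, (∑ i, Atil s i j * ν i) * |w j u| := by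
          simp only [Finset.mul_sum, Finset.sum_mul]
          rw [Finset.sum_comm]
          refine Finset.sum_congr rfl fun j _ => Finset.sum_congr rfl fun i _ => by ring
        have e2 : ∑ i, ν i * (∑ j, Btil s i j * p j)
            = ∑ k, (∑ i, Btil s i k * ν i) * p k := by
          simp only [Finset.mul_sum, Finset.sum_mul]
          rw [Finset.sum_comm]
          refine Finset.sum_congr rfl fun j _ => Finset.sum_congr rfl fun i _ => by ring
        have e3 : ∑ j, μ j * (∑ k, Dtil j k * p k)
            = ∑ k, (∑ j, Dtil j k * μ j) * p k := by
          simp only [Finset.mul_sum, Finset.sum_mul]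
          rw [Finset.sum_comm]
          refine Finset.sum_congr rfl fun k _ => Finset.sum_congr rfl fun j _ => by ring
        have expand1 : ∑ i, ν i * ((∑ j, Atil s i j * |w j u|) + (∑ j, Btil s i j * p j)
            + |A s i i| * ε)
            = (∑ j, (∑ i, Atil s i j * ν i) * |w j u|)
              + (∑ k, (∑ i, Btil s i k * ν i) * p k) + ε * C := by
          simp only [mul_add, Finset.sum_add_distrib]
          rw [e1, e2]
          congr 1
          rw [hCdef, Finset.mul_sum]
          exact Finset.sum_congr rfl fun i _ => by ring
        have expand2 : ∑ j, μ j * (|w j u| + (∑ k, Dtil j k * p k) - p j)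
            = (∑ j, μ j * |w j u|) + (∑ k, (∑ j, Dtil j k * μ j) * p k) - ∑ k, μ k * p k := by
          simp only [mul_add, mul_sub, Finset.sum_add_distrib, Finset.sum_sub_distrib]
          rw [e3]
        have hS1 : (∑ j, (∑ i, Atil s i j * ν i) * |w j u|) + (∑ j, μ j * |w j u|)
            ≤ -β * W u := by
          rw [hWdef, Finset.mul_sum, ← Finset.sum_add_distrib]
          apply Finset.sum_le_sum
          intro j _
          rw [← add_mul]
          exact mul_le_mul_of_nonneg_right (hAμ' j) (abs_nonneg _)
        have hS2 : (∑ k, (∑ i, Btil s i k * ν i) * p k)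
            + ((∑ k, (∑ j, Dtil j k * μ j) * p k) - ∑ k, μ k * p k) ≤ 0 := by
          rw [← Finset.sum_sub_distrib, ← Finset.sum_add_distrib]
          apply Finset.sum_nonpos
          intro k _
          have : (∑ i, Btil s i k * ν i) * p k + ((∑ j, Dtil j k * μ j) * p k - μ k * p k)
              = ((∑ i, Btil s i k * ν i) + ((∑ j, Dtil j k * μ j) - μ k)) * p k := by ring
          rw [this]
          exact mul_nonpos_of_nonpos_of_nonneg (hBD' k).le (hp0 k)
        show fd u ≤ -β * W u + ε * C
        rw [expand1, expand2] at step1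
        linarith
      -- the comparison function
      set Bf : ℝ → ℝ := fun t => f a + ∫ u in a..t, Bp u with hBfdef
      have hBfd : ∀ u, HasDerivAt Bf (Bp u) u := fun u =>
        ((hBpc.integral_hasStrictDerivAt a u).hasDerivAt).const_add (f a)
      have hfc : Continuous f := by
        apply Continuous.add
        · exact continuous_finset_sum _ fun i _ => continuous_const.mul (hsfc i)
        · exact continuous_finset_sum _ fun j _ => continuous_const.mul
            ((hGc j).sub ((hGc j).comp (continuous_id.sub continuous_const)))
      have happ : f t₂ ≤ Bf t₂ := by
        refine image_le_of_deriv_right_le_deriv_boundary hfc.continuousOn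
          (fun u hu => (hfderiv u (lt_of_lt_of_le ha hu.1)).hasDerivWithinAt)
          (by simp [hBfdef])
          (continuous_iff_continuousAt.2 fun u => (hBfd u).continuousAt).continuousOn
          (fun u _ => (hBfd u).hasDerivWithinAt)
          (fun u _ => hbound u) ⟨hat, le_refl t₂⟩
      have hint : ∫ u in a..t₂, Bp u = -β * (∫ u in a..t₂, W u) + ε * C * (t₂ - a) := by
        rw [hBpdef]
        show ∫ u in a..t₂, (-β * W u + ε * C) = _
        rw [intervalIntegral.integral_add (f := fun u => -β * W u) ((continuous_const.mul hWc).intervalIntegrable _ _)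
          intervalIntegrable_const, intervalIntegral.integral_const_mul,
          intervalIntegral.integral_const, smul_eq_mul]
        ring
      have hV2 : V t₂ ≤ f t₂ := by
        simp only [hVdef, hfdef]
        exact add_le_add_left (Finset.sum_le_sum fun i _ =>
          mul_le_mul_of_nonneg_left (hsflb i t₂) (hν i).le) _
      have hVa : f a ≤ V a + ε * Sν := by
        simp only [hVdef, hfdef, hSνdef, Finset.mul_sum]
        have : ∑ i, ν i * sf i a ≤ ∑ i, (ν i * |w i a| + ε * ν i) := by
          apply Finset.sum_le_sum
          intro i _
          have := mul_le_mul_of_nonneg_left (hsfub i a) (hν i).le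
          linarith
        rw [Finset.sum_add_distrib] at this
        linarith
      simp only [hBfdef] at happ
      rw [hint] at happ
      linarith
    refine le_of_forall_pos_le_add fun ε hε => ?_
    have hK : 0 ≤ C * (t₂ - a) + Sν := add_nonneg (mul_nonneg hC0 (by linarith)) hSν0
    have h := hεstep (ε / (C * (t₂ - a) + Sν + 1)) (by positivity)
    have hfrac : (ε / (C * (t₂ - a) + Sν + 1)) * (C * (t₂ - a) + Sν) ≤ ε := by
      rw [div_mul_eq_mul_div, div_le_iff₀ (by linarith)]
      nlinarith
    clear_value xb w G W V C Sν
    linarith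
  -- reduce the statement to V and W
  have hVineq : V t₂ - V t₁ ≤ -β * ∫ u in t₁..t₂, W u := by
    rcases eq_or_lt_of_le ht12 with heq | hlt
    · subst heq
      simp
    rcases (lt_or_eq_of_le ht₁) with h0 | h0
    · exact key t₁ h0 ht12
    · -- t₁ = 0 : limiting argument
      subst h0
      set H : ℝ → ℝ := fun t => ∫ u in (0:ℝ)..t, W u with hHdef
      have hHd : ∀ u, HasDerivAt H (W u) u := fun u =>
        (hWc.integral_hasStrictDerivAt 0 u).hasDerivAt
      have hHc : Continuous H := continuous_iff_continuousAt.2 fun u => (hHd u).continuousAt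
      have hsplit : ∀ c, ∫ u in c..t₂, W u = H t₂ - H c := by
        intro c
        rw [hHdef]
        exact (intervalIntegral.integral_interval_sub_left
          (hWc.intervalIntegrable _ _) (hWc.intervalIntegrable _ _)).symm
      have hev : ∀ᶠ c in nhdsWithin 0 (Set.Ioi 0),
          V t₂ - V c ≤ -β * (H t₂ - H c) := by
        filter_upwards [Ioo_mem_nhdsGT_of_mem ⟨le_refl (0:ℝ), hlt⟩] with c hc
        rw [← hsplit c]
        exact key c hc.1 hc.2.le
      have h1 : Filter.Tendsto (fun c => V t₂ - V c) (nhdsWithin 0 (Set.Ioi 0))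
          (nhds (V t₂ - V 0)) :=
        ((continuous_const.sub hVc).tendsto 0).mono_left nhdsWithin_le_nhds
      have h2 : Filter.Tendsto (fun c => -β * (H t₂ - H c)) (nhdsWithin 0 (Set.Ioi 0))
          (nhds (-β * (H t₂ - H 0))) :=
        ((continuous_const.mul (continuous_const.sub hHc)).tendsto 0).mono_left
          nhdsWithin_le_nhds
      have := le_of_tendsto_of_tendsto h1 h2 hev
      rw [hsplit 0]
      exact this
  -- rewrite goal in terms of V and W
  have hxe2 : x t₂ = xb t₂ := (hxbeq t₂ (by linarith)).symm
  have hxe2τ : x (t₂ - τ) = xb (t₂ - τ) := (hxbeq (t₂ - τ) (by linarith)).symm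
  have hxe1 : x t₁ = xb t₁ := (hxbeq t₁ (by linarith)).symm
  have hxe1τ : x (t₁ - τ) = xb (t₁ - τ) := (hxbeq (t₁ - τ) (by linarith)).symm
  have hIG : ∀ t, 0 ≤ t → ∀ j, (∫ z in (t - τ)..t, |x z j|) = G j t - G j (t - τ) := by
    intro t ht j
    have h1 : (∫ z in (t - τ)..t, |x z j|) = ∫ z in (t - τ)..t, |xb z j| := by
      apply intervalIntegral.integral_congr
      intro z hz
      rw [Set.uIcc_of_le (by linarith)] at hz
      show |x z j| = |xb z j|
      rw [hxbeq z (by linarith [hz.1])]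
    rw [h1, hGdef]
    exact (intervalIntegral.integral_interval_sub_left
      (((hxbj j).abs).intervalIntegrable _ _) (((hxbj j).abs).intervalIntegrable _ _)).symm
  have hRHS : (∫ u in t₁..t₂, ∑ j, |x u j - ∑ k, D j k * x (u - τ) k|)
      = ∫ u in t₁..t₂, W u := by
    apply intervalIntegral.integral_congr
    intro z hz
    rw [Set.uIcc_of_le ht12] at hz
    show ∑ j, |x z j - ∑ k, D j k * x (z - τ) k| = ∑ j, |w j z|
    apply Finset.sum_congr rfl
    intro j _
    simp only [hwdef]
    rw [hxbeq z (by linarith [hz.1]), hxbeq (z - τ) (by linarith [hz.1])]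
  rw [hxe2, hxe2τ, hxe1, hxe1τ, hRHS]
  have hI2 := fun j => hIG t₂ (le_trans ht₁ ht12) j
  have hI1 := fun j => hIG t₁ ht₁ j
  calc ((∑ i, ν i * |xb t₂ i - ∑ k, D i k * xb (t₂ - τ) k|) +
          ∑ j, μ j * ∫ z in (t₂ - τ)..t₂, |x z j|) -
        ((∑ i, ν i * |xb t₁ i - ∑ k, D i k * xb (t₁ - τ) k|) +
          ∑ j, μ j * ∫ z in (t₁ - τ)..t₁, |x z j|)
      = V t₂ - V t₁ := by
        simp only [hVdef, hwdef]
        congr 1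
        · congr 1
          exact Finset.sum_congr rfl fun j _ => by rw [hI2 j]
        · congr 1
          exact Finset.sum_congr rfl fun j _ => by rw [hI1 j]
    _ ≤ -β * ∫ u in t₁..t₂, W u := hVineq
end

section
/- Let A^(1),…,A^(N), B^(1),…,B^(N) ∈ ℝ^{n×n} be nonnegative matrices and suppose there exists ν ∈ ℝ^n with ν ≫ 0 such that (A^(s) + B^(r) − I)^T ν ≪ 0 for all s, r ∈ {1,…,N}. Then there exist μ ∈ ℝ^n with μ ≫ 0 and β > 0 with the following property: for every s ∈ {1,…,N}, every integer delay m ≥ 0, every continuous diagonal map f(x) = (f_1(x_1),…,f_n(x_n))^T with x_i f_i(x_i) > 0 for x_i ≠ 0 and |f_i(x_i)| ≤ |x_i| for all i, and every sequence x(k) ∈ ℝ^n (k ≥ −m) satisfying x(k+1) = A^(s) f(x(k)) + B^(s) f(x(k−m)) for all k ≥ 0, the functional V(k) = Σ_{i=1}^n ν_i |x_i(k)| + Σ_{i=1}^n μ_i Σ_{l=1}^m |f_i(x_i(k−l))| satisfies V(k+1) − V(k) ≤ −β Σ_{j=1}^n |f_j(x_j(k))| for all k ≥ 0. -/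
open Matrix

lemma tele_aux (g : ℤ → ℝ) (k : ℤ) (m : ℕ) :
    (∑ l ∈ Finset.Icc 1 m, g (k + 1 - l)) - ∑ l ∈ Finset.Icc 1 m, g (k - l)
      = g k - g (k - m) := by
  induction m with
  | zero => simp
  | succ m ih =>
    rw [Finset.sum_Icc_succ_top (by omega), Finset.sum_Icc_succ_top (by omega)]
    have e : k + 1 - ((m : ℤ) + 1) = k - m := by ring
    push_cast [e] at *
    linarith [ih]

/-- Theorem 5.1: for nonnegative `A s`, `B s` and `ν ≫ 0` with `(A s + B r − I)ᵀ ν ≪ 0`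
for all `s, r`, there are `μ ≫ 0` and `β > 0` such that along every solution of every
subsystem `x(k+1) = A s f(x(k)) + B s f(x(k-m))` (any integer delay `m ≥ 0`, any
continuous diagonal `f` with `zᵢ fᵢ(zᵢ) > 0` for `zᵢ ≠ 0` and `|fᵢ(zᵢ)| ≤ |zᵢ|`) the
functional `V(k) = Σᵢ νᵢ |xᵢ(k)| + Σᵢ μᵢ Σ_{l=1}^m |fᵢ(xᵢ(k-l))|` satisfies
`V(k+1) − V(k) ≤ -β Σⱼ |fⱼ(xⱼ(k))|`. -/
theorem stmt_15 {n N : ℕ}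
    (A B : Fin N → Matrix (Fin n) (Fin n) ℝ)
    (hA : ∀ s i j, 0 ≤ A s i j) (hB : ∀ s i j, 0 ≤ B s i j)
    (ν : Fin n → ℝ) (hν : ∀ i, 0 < ν i)
    (h : ∀ s r i, (((A s + B r - 1)ᵀ) *ᵥ ν) i < 0) :
    ∃ (μ : Fin n → ℝ) (β : ℝ), (∀ i, 0 < μ i) ∧ 0 < β ∧
      ∀ (s : Fin N) (m : ℕ),
      ∀ f : Fin n → ℝ → ℝ, (∀ i, Continuous (f i)) →
        (∀ i z, z ≠ 0 → 0 < z * f i z) →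
        (∀ i z, |f i z| ≤ |z|) →
      ∀ x : ℤ → Fin n → ℝ,
        (∀ k : ℤ, 0 ≤ k →
          x (k + 1) = A s *ᵥ (fun i => f i (x k i)) + B s *ᵥ (fun i => f i (x (k - m) i))) →
      ∀ k : ℤ, 0 ≤ k →
        ((∑ i, ν i * |x (k + 1) i|) +
            ∑ i, μ i * ∑ l ∈ Finset.Icc 1 m, |f i (x (k + 1 - l) i)|) -
          ((∑ i, ν i * |x k i|) + ∑ i, μ i * ∑ l ∈ Finset.Icc 1 m, |f i (x (k - l) i)|) ≤
          -β * ∑ j, |f j (x k j)| := by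
  rcases Nat.eq_zero_or_pos N with hN | hN
  · refine ⟨fun _ => 1, 1, fun _ => one_pos, one_pos, fun s => ?_⟩
    exact absurd (s.2.trans_eq hN) (Nat.not_lt_zero _)
  rcases Nat.eq_zero_or_pos n with hn | hn
  · refine ⟨fun _ => 1, 1, fun _ => one_pos, one_pos, fun s m f _ _ _ x _ k _ => ?_⟩
    subst hn
    simp
  obtain ⟨i0⟩ : Nonempty (Fin n) := ⟨⟨0, hn⟩⟩
  obtain ⟨s0⟩ : Nonempty (Fin N) := ⟨⟨0, hN⟩⟩
  set δ : ℝ := Finset.inf' Finset.univ ⟨(s0, s0, i0), Finset.mem_univ _⟩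
      (fun p : Fin N × Fin N × Fin n => -(((A p.1 + B p.2.1 - 1)ᵀ) *ᵥ ν) p.2.2) with hδdef
  have hδpos : 0 < δ := by
    rw [hδdef]; apply (Finset.lt_inf'_iff _).2
    intro p _
    simpa using h p.1 p.2.1 p.2.2
  have hδle : ∀ s r j, (((A s + B r - 1)ᵀ) *ᵥ ν) j ≤ -δ := by
    intro s r j
    have := Finset.inf'_le (b := (s, r, j))
      (fun p : Fin N × Fin N × Fin n => -(((A p.1 + B p.2.1 - 1)ᵀ) *ᵥ ν) p.2.2)
      (Finset.mem_univ _)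
    rw [← hδdef] at this
    linarith
  set β : ℝ := δ / 2 with hβdef
  have hβpos : 0 < β := by positivity
  set μ : Fin n → ℝ := fun j =>
      Finset.sup' Finset.univ ⟨s0, Finset.mem_univ _⟩ (fun r => ((B r)ᵀ *ᵥ ν) j) + β
      with hμdef
  have hBν : ∀ r j, 0 ≤ ((B r)ᵀ *ᵥ ν) j := by
    intro r j
    simp only [mulVec, dotProduct, transpose_apply]
    apply Finset.sum_nonneg
    intro i _
    exact mul_nonneg (hB r i j) (hν i).le
  have hμge : ∀ r j, ((B r)ᵀ *ᵥ ν) j + β ≤ μ j := by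
    intro r j
    have := Finset.le_sup' (b := r) (fun r => ((B r)ᵀ *ᵥ ν) j) (Finset.mem_univ _)
    simp only [hμdef]
    linarith
  have hμpos : ∀ j, 0 < μ j := fun j => lt_of_lt_of_le (by linarith [hBν s0 j]) (hμge s0 j)
  refine ⟨μ, β, hμpos, hβpos, fun s m f hf hsgn hbd x hx k hk => ?_⟩
  set G : ℤ → Fin n → ℝ := fun k j => |f j (x k j)| with hGdef
  have hGnn : ∀ k j, 0 ≤ G k j := fun k j => abs_nonneg _
  -- telescoping
  have htele : ∀ i, (∑ l ∈ Finset.Icc 1 m, |f i (x (k + 1 - l) i)|)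
      - ∑ l ∈ Finset.Icc 1 m, |f i (x (k - l) i)| = G k i - G (k - m) i :=
    fun i => tele_aux (fun t => |f i (x t i)|) k m
  set a : Fin n → ℝ := fun j => ((A s)ᵀ *ᵥ ν) j with hadef
  set b : Fin n → ℝ := fun j => ((B s)ᵀ *ᵥ ν) j with hbdef
  -- bound on |x(k+1) i|
  have hx1 : ∀ i, |x (k + 1) i| ≤
      (∑ j, A s i j * G k j) + ∑ j, B s i j * G (k - m) j := by
    intro i
    rw [hx k hk]
    simp only [Pi.add_apply, mulVec, dotProduct]
    refine (abs_add_le _ _).trans (add_le_add ?_ ?_) <;>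
      refine (Finset.abs_sum_le_sum_abs _ _).trans (Finset.sum_le_sum fun j _ => ?_)
    · rw [abs_mul, abs_of_nonneg (hA s i j)]
    · rw [abs_mul, abs_of_nonneg (hB s i j)]
  have key1 : ∑ i, ν i * |x (k + 1) i| ≤
      (∑ j, a j * G k j) + ∑ j, b j * G (k - m) j := by
    calc ∑ i, ν i * |x (k + 1) i|
        ≤ ∑ i, ν i * ((∑ j, A s i j * G k j) + ∑ j, B s i j * G (k - m) j) :=
          Finset.sum_le_sum fun i _ => mul_le_mul_of_nonneg_left (hx1 i) (hν i).le
      _ = (∑ j, a j * G k j) + ∑ j, b j * G (k - m) j := by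
          simp only [hadef, hbdef, mulVec, dotProduct, transpose_apply, mul_add,
            Finset.mul_sum, Finset.sum_add_distrib, Finset.sum_mul]
          congr 1 <;> rw [Finset.sum_comm] <;>
            exact Finset.sum_congr rfl fun _ _ => Finset.sum_congr rfl fun _ _ => by ring
  have key2 : ∑ i, ν i * G k i ≤ ∑ i, ν i * |x k i| :=
    Finset.sum_le_sum fun i _ => mul_le_mul_of_nonneg_left (hbd i _) (hν i).le
  -- coefficient bounds
  have hsplit : ∀ r j, (((A s + B r - 1)ᵀ) *ᵥ ν) j = a j + ((B r)ᵀ *ᵥ ν) j - ν j := by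
    intro r j
    simp only [hadef, mulVec, dotProduct, transpose_apply, Matrix.sub_apply,
      Matrix.add_apply, Matrix.one_apply, sub_mul, add_mul,
      Finset.sum_sub_distrib, Finset.sum_add_distrib]
    congr 1
    simp [ite_mul]
  have c1 : ∀ j, a j - ν j + μ j ≤ -β := by
    intro j
    obtain ⟨r, -, hr⟩ := Finset.exists_mem_eq_sup' (s := (Finset.univ : Finset (Fin N)))
      ⟨s0, Finset.mem_univ _⟩ (fun r => ((B r)ᵀ *ᵥ ν) j)
    have h1 : μ j = ((B r)ᵀ *ᵥ ν) j + β := by rw [hμdef]; dsimp only; rw [hr]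
    have h2 := hδle s r j
    rw [hsplit r j] at h2
    rw [h1]
    linarith [h2, hβdef]
  have c2 : ∀ j, b j - μ j ≤ -β := by
    intro j
    have := hμge s j
    rw [hbdef]
    linarith
  -- assemble
  have S1 : ∑ j, (a j - ν j + μ j) * G k j ≤ ∑ j, -β * G k j :=
    Finset.sum_le_sum fun j _ => mul_le_mul_of_nonneg_right (c1 j) (hGnn k j)
  have S2 : ∑ j, (b j - μ j) * G (k - m) j ≤ 0 :=
    Finset.sum_nonpos fun j _ => mul_nonpos_of_nonpos_of_nonneg
      (le_trans (c2 j) (by linarith)) (hGnn _ j)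
  have Emu : ∑ i, μ i * (∑ l ∈ Finset.Icc 1 m, |f i (x (k + 1 - l) i)|)
      - ∑ i, μ i * (∑ l ∈ Finset.Icc 1 m, |f i (x (k - l) i)|)
      = ∑ i, μ i * (G k i - G (k - m) i) := by
    rw [← Finset.sum_sub_distrib]
    exact Finset.sum_congr rfl fun i _ => by rw [← mul_sub, htele i]
  have Ebig : (∑ j, (a j - ν j + μ j) * G k j) + ∑ j, (b j - μ j) * G (k - m) j
      = ((∑ j, a j * G k j) + ∑ j, b j * G (k - m) j) - (∑ j, ν j * G k j)
        + ∑ i, μ i * (G k i - G (k - m) i) := by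
    simp only [sub_mul, add_mul, mul_sub, Finset.sum_add_distrib, Finset.sum_sub_distrib]
    ring
  have Eneg : ∑ j, -β * G k j = -β * ∑ j, G k j := by rw [Finset.mul_sum]
  have goal_eq : -β * ∑ j, |f j (x k j)| = -β * ∑ j, G k j := rfl
  rw [goal_eq]
  linarith [S1, S2, key1, key2, Emu, Ebig, Eneg]
end

section
/- Let A^(1),…,A^(N) ∈ ℝ^{n×n} and, for each l ∈ {1,…,m}, let B_l^(1),…,B_l^(N) ∈ ℝ^{n×n} be nonnegative matrices. Suppose there exists ν ∈ ℝ^n with ν ≫ 0 such that (A^(s) + B_1^(r_1) + ⋯ + B_m^(r_m) − I)^T ν ≪ 0 for all indices s, r_1,…,r_m ∈ {1,…,N}. Then there exist vectors μ_1,…,μ_m ∈ ℝ^n with μ_l ≫ 0 for each l such that (A^(s) − I)^T ν + μ_1 + ⋯ + μ_m ≪ 0 and (B_l^(s))^T ν − μ_l ≪ 0 for all s ∈ {1,…,N} and all l ∈ {1,…,m}. -/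
open Matrix

lemma expand_aux {n N m : ℕ}
    (A : Fin N → Matrix (Fin n) (Fin n) ℝ)
    (B : Fin m → Fin N → Matrix (Fin n) (Fin n) ℝ)
    (ν : Fin n → ℝ) (s : Fin N) (r : Fin m → Fin N) (i : Fin n) :
    (((A s + (∑ l, B l (r l)) - 1)ᵀ) *ᵥ ν) i
      = (((A s - 1)ᵀ) *ᵥ ν) i + ∑ l, ((B l (r l))ᵀ *ᵥ ν) i := by
  have : A s + (∑ l, B l (r l)) - 1 = (A s - 1) + ∑ l, B l (r l) := by
    rw [add_sub_right_comm]
  rw [this, Matrix.transpose_add, Matrix.add_mulVec, Pi.add_apply]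
  congr 1
  rw [Matrix.transpose_sum]
  induction (Finset.univ : Finset (Fin m)) using Finset.induction with
  | empty => simp
  | insert _ _ hx ih =>
      rw [Finset.sum_insert hx, Finset.sum_insert hx, Matrix.add_mulVec,
        Pi.add_apply, ih]

/-- Algebraic core of Theorem 5.2 (several delays, discrete time): if the matrices
`A s` and `B_l^(s)` are nonnegative and `(A s + B₁^(r₁) + ⋯ + B_m^(r_m) − I)ᵀ ν ≪ 0`
for a strictly positive vector `ν` and all index choices, then there exist strictly
positive vectors `μ₁, …, μ_m` with `(A s − I)ᵀ ν + μ₁ + ⋯ + μ_m ≪ 0` and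
`(B_l^(s))ᵀ ν − μ_l ≪ 0` for all `s, l`. -/
theorem stmt_17 {n N m : ℕ}
    (A : Fin N → Matrix (Fin n) (Fin n) ℝ)
    (B : Fin m → Fin N → Matrix (Fin n) (Fin n) ℝ)
    (hB : ∀ l s i j, 0 ≤ B l s i j)
    (ν : Fin n → ℝ) (hν : ∀ i, 0 < ν i)
    (h : ∀ (s : Fin N) (r : Fin m → Fin N) (i : Fin n),
      (((A s + (∑ l, B l (r l)) - 1)ᵀ) *ᵥ ν) i < 0) :
    ∃ μ : Fin m → Fin n → ℝ, (∀ l i, 0 < μ l i) ∧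
      (∀ s i, (((A s - 1)ᵀ) *ᵥ ν) i + ∑ l, μ l i < 0) ∧
      (∀ s l i, ((B l s)ᵀ *ᵥ ν) i - μ l i < 0) := by
  rcases Nat.eq_zero_or_pos N with hN | hN
  · subst hN
    exact ⟨fun _ _ => 1, fun _ _ => one_pos, fun s => s.elim0, fun s => s.elim0⟩
  rcases Nat.eq_zero_or_pos m with hm | hm
  · subst hm
    refine ⟨fun l => l.elim0, fun l => l.elim0, ?_, fun _ l => l.elim0⟩
    intro s i
    have := h s (fun l => l.elim0) i
    rw [expand_aux] at this
    simpa using this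
  haveI : Nonempty (Fin N) := ⟨⟨0, hN⟩⟩
  have hne : (Finset.univ : Finset (Fin N)).Nonempty := Finset.univ_nonempty
  set g : Fin m → Fin N → Fin n → ℝ := fun l s i => ((B l s)ᵀ *ᵥ ν) i with hg
  set a : Fin N → Fin n → ℝ := fun s i => (((A s - 1)ᵀ) *ᵥ ν) i with ha
  set M : Fin m → Fin n → ℝ := fun l i => Finset.univ.sup' hne (fun s => g l s i) with hM
  set c : Fin n → ℝ := fun i => Finset.univ.sup' hne (fun s => a s i) + ∑ l, M l i with hc
  -- c i < 0
  have hcneg : ∀ i, c i < 0 := by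
    intro i
    obtain ⟨s, -, hs⟩ := Finset.exists_mem_eq_sup' hne (fun s => a s i)
    have hr : ∀ l : Fin m, ∃ t : Fin N, M l i = g l t i := by
      intro l
      obtain ⟨t, -, ht⟩ := Finset.exists_mem_eq_sup' hne (fun s => g l s i)
      exact ⟨t, ht⟩
    choose r hrr using hr
    have := h s r i
    rw [expand_aux] at this
    calc c i = a s i + ∑ l, M l i := by simp only [hc]; rw [hs]
    _ = (((A s - 1)ᵀ) *ᵥ ν) i + ∑ l, ((B l (r l))ᵀ *ᵥ ν) i := by
        rw [ha]; congr 1; exact Finset.sum_congr rfl (fun l _ => hrr l)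
    _ < 0 := this
  have hgnn : ∀ l s i, 0 ≤ g l s i := by
    intro l s i
    simp only [hg, Matrix.mulVec, dotProduct, Matrix.transpose_apply]
    exact Finset.sum_nonneg fun j _ => mul_nonneg (hB l s j i) (hν j).le
  have hMg : ∀ l s i, g l s i ≤ M l i := fun l s i =>
    Finset.le_sup' (fun s => g l s i) (Finset.mem_univ s)
  have hε : ∀ i, 0 < -c i / (2 * m) := fun i =>
    div_pos (by linarith [hcneg i]) (by positivity)
  refine ⟨fun l i => M l i + (-c i) / (2 * m), ?_, ?_, ?_⟩
  · intro l i
    have := hMg l (Classical.arbitrary _) i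
    have := hgnn l (Classical.arbitrary _) i
    have := hε i
    linarith
  · intro s i
    have hsum : ∑ l : Fin m, (M l i + (-c i) / (2 * m)) = (∑ l, M l i) + (-c i) / 2 := by
      rw [Finset.sum_add_distrib, Finset.sum_const, Finset.card_univ, Fintype.card_fin,
        nsmul_eq_mul]
      have hm' : (m : ℝ) ≠ 0 := Nat.cast_ne_zero.mpr hm.ne'
      field_simp
    rw [hsum]
    have hsa : a s i ≤ Finset.univ.sup' hne (fun s => a s i) :=
      Finset.le_sup' (fun s => a s i) (Finset.mem_univ s)
    have hci := hcneg i
    simp only [hc] at hci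
    have heq : (((A s - 1)ᵀ) *ᵥ ν) i = a s i := rfl
    have hc2 : -c i / 2 = -((Finset.univ.sup' hne fun s => a s i) + ∑ l, M l i) / 2 := by
      simp only [hc]
    rw [heq, hc2]
    linarith
  · intro s l i
    have h1 := hMg l s i
    have h2 := hε i
    have heq : ((B l s)ᵀ *ᵥ ν) i = g l s i := rfl
    rw [heq]
    linarith
end
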